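/- arXiv:2007.04617 — 3 statements merged into one kernel-verified Lean document; each statement's English description precedes it below -/
import Mathlib

section
/- Let A ∈ ℝ^{m×n}, b ∈ ℝ^m, p,q ∈ (0,1], let Â and b̂ be the Bernoulli(p)- and Bernoulli(q)-masked versions of A and b, let {I_i}_{i=1}^s partition the rows and {J_j}_{j=1}^t partition the columns, and let (I,J) be a uniformly chosen pair (probability 1/(st)), independent of the masks. Define g(x) = I_{:,J}(Â_{I,J})^T ( Â_{I,:} x / p² − b̂_I / (pq) ) − ((1−p)/p²) diag( I_{:,J}(Â_{I,J})^T Â_{I,:} ) x. Then for every fixed x ∈ ℝ^n, E[g(x)] = (1/(st)) A^T (A x − b), i.e., g(x) is an unbiased estimator of the gradient of f(x) = (1/(2st))‖Ax − b‖₂². -/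
open Matrix BigOperators Finset Filter

noncomputable section

/-- Entrywise Bernoulli mask of a matrix. -/
def maskM {m n : ℕ} (δ : Fin m → Fin n → Bool) (A : Matrix (Fin m) (Fin n) ℝ) :
    Matrix (Fin m) (Fin n) ℝ := Matrix.of fun i j => if δ i j then A i j else 0

/-- Entrywise Bernoulli mask of a vector. -/
def maskV {m : ℕ} (ε : Fin m → Bool) (b : Fin m → ℝ) : Fin m → ℝ :=
  fun i => if ε i then b i else 0

/-- Probability of a given mask realization: i.i.d. Bernoulli(p) entries. -/
def wM {m n : ℕ} (p : ℝ) (δ : Fin m → Fin n → Bool) : ℝ :=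
  ∏ i, ∏ j, (if δ i j then p else 1 - p)

/-- Probability of a given vector-mask realization: i.i.d. Bernoulli(q) entries. -/
def wV {m : ℕ} (q : ℝ) (ε : Fin m → Bool) : ℝ :=
  ∏ i, (if ε i then q else 1 - q)

/-- `dsel K = I_{:,K} (I_{:,K})ᵀ`, the 0/1 diagonal selection matrix of an index set. -/
def dsel {k : ℕ} (K : Finset (Fin k)) : Matrix (Fin k) (Fin k) ℝ :=
  Matrix.diagonal fun i => if i ∈ K then (1 : ℝ) else 0

/-- `diagPart M` keeps only the diagonal of the square matrix `M`. -/
def diagPart {k : ℕ} (M : Matrix (Fin k) (Fin k) ℝ) : Matrix (Fin k) (Fin k) ℝ :=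
  Matrix.diagonal fun i => M i i

/-- Squared Euclidean norm. -/
def sqnorm {k : ℕ} (v : Fin k → ℝ) : ℝ := ∑ i, (v i) ^ 2

/-- Squared Frobenius norm. -/
def frobSq {m n : ℕ} (A : Matrix (Fin m) (Fin n) ℝ) : ℝ := ∑ i, ∑ j, (A i j) ^ 2

/-- `P` is a partition of the index set into nonempty pairwise disjoint blocks. -/
def IsPartition {k s : ℕ} (P : Fin s → Finset (Fin k)) : Prop :=
  (∀ i : Fin k, ∃! a : Fin s, i ∈ P a) ∧ ∀ a : Fin s, (P a).Nonempty

/-! Because the row blocks and the column blocks are partitions, `∑ i, dsel (R i) = 1` and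
`∑ j, dsel (Cc j) = 1`, so summing the block estimator over all pairs `(i, j)` gives the full
estimator `Âᵀ (Â x / p² - b̂ / (p q)) - ((1 - p) / p²) diag(Âᵀ Â) x`; the uniform choice of the
pair only contributes the factor `1 / (s t)`. For independent Bernoulli masks `E[Â] = p A`,
`E[b̂] = q b`, and `E[Âᵀ Â] = p² Aᵀ A + (p - p²) diag(Aᵀ A)`, since distinct entries of `Â` are
independent while `E[Â_rk²] = p A_rk²`. The diagonal correction cancels exactly the resulting
excess `((1 - p) / p) diag(Aᵀ A) x`. -/

def bernoulliWeight {ι : Type*} [Fintype ι] (p : ℝ) (σ : ι → Bool) : ℝ :=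
  ∏ i, if σ i then p else 1 - p

section Bernoulli

variable {ι : Type*} [Fintype ι] [DecidableEq ι] (p : ℝ)

theorem sum_bernoulliWeight_mul_prod (F : ι → Bool → ℝ) :
    ∑ σ, bernoulliWeight p σ * ∏ i, F i (σ i) =
      ∏ i, (p * F i true + (1 - p) * F i false) := by
  simp only [bernoulliWeight, ← Finset.prod_mul_distrib]
  exact (Fintype.prod_sum fun i b => (if b then p else 1 - p) * F i b).symm.trans (by simp)

theorem sum_bernoulliWeight : ∑ σ : ι → Bool, bernoulliWeight p σ = 1 := by
  simpa using sum_bernoulliWeight_mul_prod p (fun _ _ => 1)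

theorem sum_bernoulliWeight_mul_apply (i : ι) (f : Bool → ℝ) :
    ∑ σ, bernoulliWeight p σ * f (σ i) = p * f true + (1 - p) * f false := by
  let F := Function.update (fun _ _ => (1 : ℝ)) i f
  have hF : ∀ k ≠ i, F k = fun _ => 1 := fun k hk => by simp [F, hk]
  convert sum_bernoulliWeight_mul_prod p F using 3 with σ <;>
    rw [Fintype.prod_eq_single i fun k hk => by simp [hF k hk]] <;> simp [F]

theorem sum_bernoulliWeight_mul_apply_mul_apply {i j : ι} (hij : i ≠ j) (f g : Bool → ℝ) :
    ∑ σ, bernoulliWeight p σ * (f (σ i) * g (σ j)) =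
      (p * f true + (1 - p) * f false) * (p * g true + (1 - p) * g false) := by
  let F := Function.update (Function.update (fun _ _ => (1 : ℝ)) i f) j g
  have hF : ∀ k, k ≠ i ∧ k ≠ j → F k = fun _ => 1 := fun k hk => by simp [F, hk]
  convert sum_bernoulliWeight_mul_prod p F using 3 with σ <;>
    rw [Fintype.prod_eq_mul i j hij fun k hk => by simp [hF k hk]] <;> simp [F, hij]

end Bernoulli

section Masks

variable {m n : ℕ} (p : ℝ)

theorem wM_curry (σ : Fin m × Fin n → Bool) :
    wM p (Function.curry σ) = bernoulliWeight p σ := by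
  rw [bernoulliWeight, Fintype.prod_prod_type]
  rfl

theorem sum_wM_mul (f : (Fin m → Fin n → Bool) → ℝ) :
    ∑ δ, wM p δ * f δ = ∑ σ, bernoulliWeight p σ * f (Function.curry σ) := by
  rw [← (Equiv.curry _ _ _).sum_comp]
  simp [wM_curry]

theorem sum_wV (q : ℝ) : ∑ ε : Fin m → Bool, wV q ε = 1 :=
  sum_bernoulliWeight q

theorem sum_wV_smul_maskV (q : ℝ) (b : Fin m → ℝ) :
    ∑ ε, wV q ε • maskV ε b = q • b := by
  ext r
  simp only [Finset.sum_apply, Pi.smul_apply, smul_eq_mul]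
  exact (sum_bernoulliWeight_mul_apply q r fun e => if e then b r else 0).trans (by simp)

variable (A : Matrix (Fin m) (Fin n) ℝ)

theorem sum_wM_smul_maskM : ∑ δ, wM p δ • maskM δ A = p • A := by
  ext r k
  simp only [Matrix.sum_apply, Matrix.smul_apply, smul_eq_mul, sum_wM_mul]
  exact (sum_bernoulliWeight_mul_apply p (r, k) fun e => if e then A r k else 0).trans (by simp)

theorem sum_wM_mul_maskM_mul_maskM (r : Fin m) (k l : Fin n) :
    ∑ δ, wM p δ * (maskM δ A r k * maskM δ A r l) =
      (if k = l then p else p ^ 2) * (A r k * A r l) := by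
  rw [sum_wM_mul]
  rcases eq_or_ne k l with rfl | hkl
  · exact (sum_bernoulliWeight_mul_apply p (r, k) fun e =>
      (if e then A r k else 0) * (if e then A r k else 0)).trans (by simp)
  · exact (sum_bernoulliWeight_mul_apply_mul_apply p (i := (r, k)) (j := (r, l)) (by simp [hkl])
      (fun e => if e then A r k else 0) (fun e => if e then A r l else 0)).trans
        (by simp [hkl]; ring)

theorem sum_wM_mul_transpose_mul_self_apply (k l : Fin n) :
    ∑ δ, wM p δ * ((maskM δ A)ᵀ * maskM δ A) k l =
      (if k = l then p else p ^ 2) * (Aᵀ * A) k l := by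
  simp only [Matrix.mul_apply, Matrix.transpose_apply, Finset.mul_sum]
  rw [Finset.sum_comm]
  exact Finset.sum_congr rfl fun r _ => sum_wM_mul_maskM_mul_maskM p A r k l

theorem sum_wM_smul_transpose_mul_self :
    ∑ δ, wM p δ • ((maskM δ A)ᵀ * maskM δ A) =
      p ^ 2 • (Aᵀ * A) + (p - p ^ 2) • diagPart (Aᵀ * A) := by
  ext k l
  have h := sum_wM_mul_transpose_mul_self_apply p A k l
  rcases eq_or_ne k l with rfl | hkl
  · simp only [Matrix.sum_apply, Matrix.smul_apply, smul_eq_mul, if_true] at h ⊢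
    simp only [h, Matrix.add_apply, Matrix.smul_apply, smul_eq_mul, diagPart,
      Matrix.diagonal_apply_eq]
    ring
  · simp_all [Matrix.sum_apply, diagPart]

theorem sum_wM_smul_diagPart_transpose_mul_self :
    ∑ δ, wM p δ • diagPart ((maskM δ A)ᵀ * maskM δ A) = p • diagPart (Aᵀ * A) := by
  ext k l
  rcases eq_or_ne k l with rfl | hkl
  · simpa [Matrix.sum_apply, diagPart] using sum_wM_mul_transpose_mul_self_apply p A k k
  · simp [Matrix.sum_apply, diagPart, hkl]

end Masks

theorem diagPart_sum {k : ℕ} {ι : Type*} (s : Finset ι)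
    (M : ι → Matrix (Fin k) (Fin k) ℝ) :
    diagPart (∑ i ∈ s, M i) = ∑ i ∈ s, diagPart (M i) :=
  map_sum ((Matrix.diagonalAddMonoidHom _ _).comp (Matrix.diagAddMonoidHom _ _)) M s

theorem sum_dsel {k s : ℕ} {P : Fin s → Finset (Fin k)} (hP : IsPartition P) :
    ∑ a, dsel (P a) = 1 := by
  ext i j
  rcases eq_or_ne i j with rfl | hij
  · obtain ⟨a, ha, hu⟩ := hP.1 i
    simp only [Matrix.sum_apply, dsel, Matrix.diagonal_apply_eq, Matrix.one_apply_eq]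
    rw [Finset.sum_eq_single a (fun b _ hb => if_neg fun hib => hb (hu b hib)) (by simp)]
    simp [ha]
  · simp [Matrix.sum_apply, dsel, hij]

section Blocks

variable {m n s t : ℕ} {P : Fin s → Finset (Fin m)} {Q : Fin t → Finset (Fin n)}

theorem sum_sum_dsel_mul_mul_dsel (hP : IsPartition P) (hQ : IsPartition Q)
    (N : Matrix (Fin n) (Fin m) ℝ) : ∑ i, ∑ j, dsel (Q j) * N * dsel (P i) = N := by
  simp only [← Matrix.sum_mul, ← Matrix.mul_sum, sum_dsel hP, sum_dsel hQ, Matrix.one_mul,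
    Matrix.mul_one]

theorem sum_sum_blockGradient (hP : IsPartition P) (hQ : IsPartition Q)
    (M : Matrix (Fin m) (Fin n) ℝ) (u : Fin m → ℝ) (c : ℝ) (x : Fin n → ℝ) :
    ∑ i, ∑ j, ((dsel (Q j) * Mᵀ * dsel (P i)) *ᵥ u -
        c • (diagPart (dsel (Q j) * Mᵀ * dsel (P i) * M) *ᵥ x)) =
      Mᵀ *ᵥ u - c • (diagPart (Mᵀ * M) *ᵥ x) := by
  have hK := sum_sum_dsel_mul_mul_dsel hP hQ Mᵀ
  have hKM : ∑ i, ∑ j, dsel (Q j) * Mᵀ * dsel (P i) * M = Mᵀ * M := by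
    conv_rhs => rw [← hK]
    simp only [Matrix.sum_mul]
  simp only [Finset.sum_sub_distrib, ← Finset.smul_sum, ← Matrix.sum_mulVec, ← diagPart_sum,
    hK, hKM]

end Blocks

theorem sum_sum_mul_smul_mulVec {R α β k l : Type*} [CommSemiring R] [Fintype l]
    (f : α → R) (g : β → R) (M : α → Matrix k l R) (v : β → l → R) (S : Finset α)
    (T : Finset β) :
    ∑ a ∈ S, ∑ b ∈ T, (f a * g b) • (M a *ᵥ v b) =
      (∑ a ∈ S, f a • M a) *ᵥ ∑ b ∈ T, g b • v b := by
  rw [Matrix.sum_mulVec]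
  simp only [Matrix.smul_mulVec, Matrix.mulVec_sum, Matrix.mulVec_smul, smul_smul, mul_comm]

theorem sum_wM_mul_wV_smul_estimator_eq_gradient {m n : ℕ} {p q : ℝ} (hp : p ≠ 0)
    (hq : q ≠ 0) (A : Matrix (Fin m) (Fin n) ℝ) (b : Fin m → ℝ) (x : Fin n → ℝ) :
    ∑ δ, ∑ ε, (wM p δ * wV q ε) •
        ((maskM δ A)ᵀ *ᵥ ((1 / p ^ 2) • (maskM δ A *ᵥ x) - (1 / (p * q)) • maskV ε b) -
          ((1 - p) / p ^ 2) • (diagPart ((maskM δ A)ᵀ * maskM δ A) *ᵥ x)) =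
      Aᵀ *ᵥ (A *ᵥ x - b) := by
  have hsplit : ∀ (M : Matrix (Fin m) (Fin n) ℝ) (v : Fin m → ℝ),
      Mᵀ *ᵥ ((1 / p ^ 2) • (M *ᵥ x) - (1 / (p * q)) • v) -
          ((1 - p) / p ^ 2) • (diagPart (Mᵀ * M) *ᵥ x) =
        (Mᵀ * M) *ᵥ ((1 / p ^ 2) • x) - Mᵀ *ᵥ ((1 / (p * q)) • v) -
          diagPart (Mᵀ * M) *ᵥ (((1 - p) / p ^ 2) • x) := by
    intro M v
    simp only [Matrix.mulVec_sub, Matrix.mulVec_smul, Matrix.mulVec_mulVec]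
  have hconst : ∀ v : Fin n → ℝ, ∑ ε : Fin m → Bool, wV q ε • v = v := fun v => by
    rw [← Finset.sum_smul, sum_wV, one_smul]
  simp only [hsplit, smul_sub, Finset.sum_sub_distrib]
  -- the masks are independent: each term factors into a `δ`-part and an `ε`-part
  rw [sum_sum_mul_smul_mulVec, sum_sum_mul_smul_mulVec, sum_sum_mul_smul_mulVec]
  simp only [smul_comm (wV q _) (1 / (p * q)), ← Finset.smul_sum, ← Matrix.transpose_smul,
    ← Matrix.transpose_sum, hconst, sum_wV_smul_maskV, sum_wM_smul_maskM,
    sum_wM_smul_transpose_mul_self, sum_wM_smul_diagPart_transpose_mul_self]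
  simp only [Matrix.add_mulVec, Matrix.smul_mulVec, Matrix.transpose_smul, Matrix.mulVec_smul,
    Matrix.mulVec_sub, Matrix.mulVec_mulVec, smul_smul]
  match_scalars <;> field_simp
  ring

theorem stmt4_general {m n s t : ℕ} (A : Matrix (Fin m) (Fin n) ℝ) (b : Fin m → ℝ)
    (p q : ℝ) (hp0 : 0 < p) (hq0 : 0 < q)
    (R : Fin s → Finset (Fin m)) (Cc : Fin t → Finset (Fin n))
    (hR : IsPartition R) (hC : IsPartition Cc) (x : Fin n → ℝ) :
    ∑ δ : Fin m → Fin n → Bool, ∑ ε : Fin m → Bool,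
      (wM p δ * wV q ε) •
        ((1 / (s * t : ℝ)) • ∑ i : Fin s, ∑ j : Fin t,
          ((dsel (Cc j) * (maskM δ A)ᵀ * dsel (R i)) *ᵥ
              ((1 / p ^ 2) • (maskM δ A *ᵥ x) - (1 / (p * q)) • maskV ε b)
            - ((1 - p) / p ^ 2) •
                (diagPart (dsel (Cc j) * (maskM δ A)ᵀ * dsel (R i) * maskM δ A) *ᵥ x)))
      = (1 / (s * t : ℝ)) • (Aᵀ *ᵥ (A *ᵥ x - b)) := by
  simp only [sum_sum_blockGradient hR hC, smul_comm (wM p _ * wV q _) (1 / (s * t : ℝ)),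
    ← Finset.smul_sum]
  rw [sum_wM_mul_wV_smul_estimator_eq_gradient hp0.ne' hq0.ne']

theorem stmt4 {m n s t : ℕ} (A : Matrix (Fin m) (Fin n) ℝ) (b : Fin m → ℝ)
    (p q : ℝ) (hp0 : 0 < p) (hp1 : p ≤ 1) (hq0 : 0 < q) (hq1 : q ≤ 1)
    (R : Fin s → Finset (Fin m)) (Cc : Fin t → Finset (Fin n))
    (hR : IsPartition R) (hC : IsPartition Cc) (x : Fin n → ℝ) :
    ∑ δ : Fin m → Fin n → Bool, ∑ ε : Fin m → Bool,
      (wM p δ * wV q ε) •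
        ((1 / (s * t : ℝ)) • ∑ i : Fin s, ∑ j : Fin t,
          ((dsel (Cc j) * (maskM δ A)ᵀ * dsel (R i)) *ᵥ
              ((1 / p ^ 2) • (maskM δ A *ᵥ x) - (1 / (p * q)) • maskV ε b)
            - ((1 - p) / p ^ 2) •
                (diagPart (dsel (Cc j) * (maskM δ A)ᵀ * dsel (R i) * maskM δ A) *ᵥ x)))
      = (1 / (s * t : ℝ)) • (Aᵀ *ᵥ (A *ᵥ x - b)) :=
  stmt4_general A b p q hp0 hq0 R Cc hR hC x
end
end

section
/- Under the setup of the masked stochastic gradient g(x) (Algorithm 2 of the paper), for every fixed x ∈ ℝ^n: E[‖g(x)‖₂²] ≤ (2/(st p²))‖A‖_F² ‖A x − b‖₂² + (2(1−q)/(st p² q))‖A‖_F² ‖b‖₂² + (2(1−p)/(st p³))‖A‖_F² x^T diag(A^T A) x + (2(1−p)²/(st p³)) ‖diag(A^T A) x‖₂². -/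
open Matrix BigOperators Finset Filter

noncomputable section

namespace Stmt9Aux
noncomputable def ind (b : Bool) : ℝ := if b then 1 else 0
@[simp] lemma ind_mul_self (b : Bool) : ind b * ind b = ind b := by cases b <;> simp [ind]
lemma sum_pi_prod {ι α : Type*} [Fintype ι] [DecidableEq ι] [Fintype α] [DecidableEq α]
    (g : ι → α → ℝ) : ∑ f : ι → α, ∏ i, g i (f i) = ∏ i, ∑ a, g i a := by
  rw [Finset.prod_univ_sum, Fintype.piFinset_univ]
lemma sum_pi_mul {ι α : Type*} [Fintype ι] [DecidableEq ι] [Fintype α] [DecidableEq α]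
    (u : α → ℝ) (v : ι → α → ℝ) :
    ∑ f : ι → α, ∏ i, (u (f i) * v i (f i)) = ∏ i, ∑ a, (u a * v i a) :=
  sum_pi_prod (fun i a => u a * v i a)

lemma prod_two {m : ℕ} {r r' : Fin m} (h : r ≠ r') (f : Fin m → ℝ)
    (hf : ∀ i, i ≠ r → i ≠ r' → f i = 1) : ∏ i, f i = f r * f r' := by
  rw [← Finset.mul_prod_erase univ f (mem_univ r),
    ← Finset.mul_prod_erase _ f (show r' ∈ (univ : Finset (Fin m)).erase r by
      simp [Finset.mem_erase, h.symm])]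
  have h1 : ∏ i ∈ ((univ : Finset (Fin m)).erase r).erase r', f i = 1 :=
    Finset.prod_eq_one (fun i hi => by
      simp only [Finset.mem_erase] at hi
      exact hf i hi.2.1 hi.1)
  rw [h1]; ring

lemma prod_one {m : ℕ} (r : Fin m) (f : Fin m → ℝ)
    (hf : ∀ i, i ≠ r → f i = 1) : ∏ i, f i = f r := by
  rw [← Finset.mul_prod_erase univ f (mem_univ r)]
  have h1 : ∏ i ∈ (univ : Finset (Fin m)).erase r, f i = 1 :=
    Finset.prod_eq_one (fun i hi => by
      simp only [Finset.mem_erase] at hi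
      exact hf i hi.1)
  rw [h1]; ring

section Epi
variable {m : ℕ} {α : Type*} [Fintype α] [DecidableEq α] {w : α → ℝ}

lemma Epi_one (hw : ∑ a, w a = 1) : ∑ f : Fin m → α, (∏ i, w (f i)) = 1 := by
  refine Eq.trans (sum_pi_prod (fun (_ : Fin m) (a : α) => w a)) ?_
  simp [hw]

lemma Epi_single (hw : ∑ a, w a = 1) (F : α → ℝ) (r : Fin m) :
    ∑ f : Fin m → α, (∏ i, w (f i)) * F (f r) = ∑ a, w a * F a := by
  have key : ∀ f : Fin m → α, (∏ i, w (f i)) * F (f r)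
      = ∏ i, (w (f i) * if i = r then F (f i) else 1) := by
    intro f
    rw [Finset.prod_mul_distrib, Finset.prod_ite_eq' univ r fun i => F (f i)]
    simp
  simp_rw [key]
  refine Eq.trans (sum_pi_mul w (fun i a => if i = r then F a else 1)) ?_
  have key2 : ∀ i : Fin m, (∑ a, w a * if i = r then F a else 1)
      = if i = r then ∑ a, w a * F a else 1 := by
    intro i; split_ifs <;> simp [hw]
  simp_rw [key2]
  rw [Finset.prod_ite_eq' univ r fun _ => ∑ a, w a * F a]
  simp

lemma Epi_pair (hw : ∑ a, w a = 1) (F G : α → ℝ) {r r' : Fin m} (h : r ≠ r') :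
    ∑ f : Fin m → α, (∏ i, w (f i)) * (F (f r) * G (f r'))
      = (∑ a, w a * F a) * (∑ a, w a * G a) := by
  have key : ∀ f : Fin m → α, (∏ i, w (f i)) * (F (f r) * G (f r'))
      = ∏ i, (w (f i) * if i = r then F (f i) else if i = r' then G (f i) else 1) := by
    intro f
    rw [Finset.prod_mul_distrib]
    rw [prod_two h (fun i => if i = r then F (f i) else if i = r' then G (f i) else 1)
      (by intro i h1 h2; simp [h1, h2])]
    simp [h.symm]
  simp_rw [key]
  refine Eq.trans (sum_pi_mul w (fun i a => if i = r then F a else if i = r' then G a else 1)) ?_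
  have key2 : ∀ i : Fin m, (∑ a, w a * if i = r then F a else if i = r' then G a else 1)
      = if i = r then ∑ a, w a * F a else if i = r' then ∑ a, w a * G a else 1 := by
    intro i; split_ifs <;> simp [hw]
  simp_rw [key2]
  rw [prod_two h _ (by intro i h1 h2; simp [h1, h2])]
  simp [h.symm]

end Epi

/-- Bernoulli weight on Bool. -/
noncomputable def bp (p : ℝ) (b : Bool) : ℝ := if b then p else 1 - p

lemma sum_bp (p : ℝ) : ∑ b, bp p b = 1 := by
  simp [bp, Fintype.sum_bool]

/-- Row weight: product of n i.i.d. Bernoulli(p). -/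
noncomputable def wRow {n : ℕ} (p : ℝ) (ρ : Fin n → Bool) : ℝ := ∏ c, bp p (ρ c)

lemma sum_wRow {n : ℕ} (p : ℝ) : ∑ ρ : Fin n → Bool, wRow p ρ = 1 := by
  refine Eq.trans (sum_pi_prod (fun (_ : Fin n) (b : Bool) => bp p b)) ?_
  have h1 : p + (1 - p) = 1 := by ring
  simp [bp, Fintype.sum_bool, h1]

lemma Erow_indset {n : ℕ} (p : ℝ) (S : Finset (Fin n)) :
    ∑ ρ : Fin n → Bool, wRow p ρ * ∏ c ∈ S, ind (ρ c) = p ^ S.card := by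
  have key : ∀ ρ : Fin n → Bool, wRow p ρ * ∏ c ∈ S, ind (ρ c)
      = ∏ c, (bp p (ρ c) * if c ∈ S then ind (ρ c) else 1) := by
    intro ρ
    rw [Finset.prod_mul_distrib]
    unfold wRow
    congr 1
    rw [Finset.prod_ite_mem univ S fun c => ind (ρ c), Finset.univ_inter]
  simp_rw [key]
  refine Eq.trans (sum_pi_mul (bp p) (fun c b => if c ∈ S then ind b else 1)) ?_
  have key2 : ∀ c : Fin n, (∑ b, bp p b * if c ∈ S then ind b else 1)
      = if c ∈ S then p else 1 := by
    intro c; split_ifs <;> simp [bp, ind, Fintype.sum_bool]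
  simp_rw [key2]
  rw [Finset.prod_ite_mem univ S fun _ => p, Finset.univ_inter, Finset.prod_const]

lemma list_ind_prod {n : ℕ} (ρ : Fin n → Bool) (l : List (Fin n)) :
    (l.map fun c => ind (ρ c)).prod = ∏ c ∈ l.toFinset, ind (ρ c) := by
  induction l with
  | nil => simp
  | cons c l ih =>
    simp only [List.map_cons, List.prod_cons, List.toFinset_cons, ih]
    by_cases hc : c ∈ l.toFinset
    · rw [Finset.insert_eq_self.2 hc, ← Finset.mul_prod_erase _ _ hc, ← mul_assoc, ind_mul_self]
    · rw [Finset.prod_insert hc]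

lemma Erow_mom {n : ℕ} (p : ℝ) (l : List (Fin n)) :
    ∑ ρ : Fin n → Bool, wRow p ρ * (l.map fun c => ind (ρ c)).prod = p ^ l.toFinset.card := by
  simp_rw [list_ind_prod]
  exact Erow_indset p _

lemma Erow_ind {n : ℕ} (p : ℝ) (c : Fin n) :
    ∑ ρ : Fin n → Bool, wRow p ρ * ind (ρ c) = p := by
  have := Erow_mom p [c]
  simpa using this

lemma mom2_val {n : ℕ} (p : ℝ) (c c' : Fin n) :
    ∑ ρ : Fin n → Bool, wRow p ρ * (ind (ρ c) * ind (ρ c'))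
      = p ^ 2 + (p - p ^ 2) * (if c' = c then 1 else 0) := by
  have h := Erow_mom p [c, c']
  simp only [List.map_cons, List.map_nil, List.prod_cons, List.prod_nil, mul_one] at h
  rw [h]
  by_cases hc : c' = c
  · subst hc; simp
  · have h2 : ([c, c'] : List (Fin n)).toFinset = {c, c'} := by simp
    have hcc : ¬ c = c' := fun h => hc h.symm
    rw [h2, Finset.card_insert_of_notMem (by simp [hcc]), Finset.card_singleton]
    simp [hc]


lemma mom3_val {n : ℕ} (p : ℝ) (c c' c'' : Fin n) :
    ∑ ρ : Fin n → Bool, wRow p ρ * (ind (ρ c) * (ind (ρ c') * ind (ρ c'')))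
      = p ^ 3
        + (p ^ 2 - p ^ 3) * ((if c' = c then (1:ℝ) else 0) + (if c'' = c then 1 else 0)
            + (if c'' = c' then 1 else 0))
        + (p - 3 * p ^ 2 + 2 * p ^ 3)
            * ((if c' = c then (1:ℝ) else 0) * (if c'' = c then 1 else 0)) := by
  have h := Erow_mom p [c, c', c'']
  simp only [List.map_cons, List.map_nil, List.prod_cons, List.prod_nil, mul_one] at h
  have hset : ([c, c', c''] : List (Fin n)).toFinset = insert c (insert c' {c''}) := by simp
  rw [h, hset]
  by_cases h1 : c' = c
  · subst h1
    by_cases h2 : c'' = c'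
    · subst h2; simp; ring
    · have e1 : insert c' (insert c' ({c''} : Finset (Fin n))) = insert c' {c''} :=
        Finset.insert_idem c' {c''}
      rw [e1, Finset.card_insert_of_notMem (by simp [Ne.symm h2]), Finset.card_singleton]
      simp [h2]
  · by_cases h2 : c'' = c
    · subst h2
      have e1 : insert c'' (insert c' ({c''} : Finset (Fin n))) = insert c' {c''} := by
        rw [Finset.insert_comm, Finset.insert_eq_self.2 (Finset.mem_singleton_self c'')]
      rw [e1, Finset.card_insert_of_notMem (by simp [h1]), Finset.card_singleton]
      simp [h1, Ne.symm h1]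
    · by_cases h3 : c'' = c'
      · subst h3
        have e1 : insert c (insert c'' ({c''} : Finset (Fin n))) = insert c {c''} := by
          rw [Finset.insert_eq_self.2 (Finset.mem_singleton_self c'')]
        rw [e1, Finset.card_insert_of_notMem (by simp [Ne.symm h2]), Finset.card_singleton]
        simp [h1, h2]
      · rw [Finset.card_insert_of_notMem (by simp [Ne.symm h1, Ne.symm h2]),
          Finset.card_insert_of_notMem (by simp [Ne.symm h3]), Finset.card_singleton]
        simp [h1, h2, h3]


lemma sum_ite_pt {k : ℕ} (c : Fin k) (g : Fin k → ℝ) :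
    ∑ c' : Fin k, (if c' = c then g c' else 0) = g c := by
  rw [Finset.sum_ite_eq' univ c g]; simp

lemma Erow_P1 {n : ℕ} (p : ℝ) (c : Fin n) (a : Fin n → ℝ) :
    ∑ ρ : Fin n → Bool, wRow p ρ * (ind (ρ c) * ∑ c', ind (ρ c') * a c')
      = p ^ 2 * (∑ c', a c') + (p - p ^ 2) * a c := by
  have step : ∀ ρ : Fin n → Bool, wRow p ρ * (ind (ρ c) * ∑ c', ind (ρ c') * a c')
      = ∑ c', a c' * (wRow p ρ * (ind (ρ c) * ind (ρ c'))) := by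
    intro ρ
    rw [Finset.mul_sum, Finset.mul_sum]
    exact Finset.sum_congr rfl (fun c' _ => by ring)
  simp only [step]
  rw [Finset.sum_comm]
  have e1 : ∀ c' : Fin n, (∑ ρ : Fin n → Bool, a c' * (wRow p ρ * (ind (ρ c) * ind (ρ c'))))
      = p ^ 2 * a c' + (p - p ^ 2) * (if c' = c then a c' else 0) := by
    intro c'
    rw [← Finset.mul_sum, mom2_val]
    split_ifs <;> ring
  simp only [e1]
  rw [Finset.sum_add_distrib, ← Finset.mul_sum, ← Finset.mul_sum, sum_ite_pt c a]

lemma Erow_P2 {n : ℕ} (p : ℝ) (c : Fin n) (a : Fin n → ℝ) :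
    ∑ ρ : Fin n → Bool, wRow p ρ * (ind (ρ c) * (∑ c', ind (ρ c') * a c') ^ 2)
      = p ^ 3 * (∑ c', a c') ^ 2
        + (p ^ 2 - p ^ 3) * (2 * a c * (∑ c', a c') + ∑ c', (a c') ^ 2)
        + (p - 3 * p ^ 2 + 2 * p ^ 3) * (a c) ^ 2 := by
  have step : ∀ ρ : Fin n → Bool, wRow p ρ * (ind (ρ c) * (∑ c', ind (ρ c') * a c') ^ 2)
      = ∑ c', ∑ c'', (a c' * a c'') * (wRow p ρ * (ind (ρ c) * (ind (ρ c') * ind (ρ c'')))) := by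
    intro ρ
    rw [sq, Finset.sum_mul_sum]
    rw [Finset.mul_sum, Finset.mul_sum]
    refine Finset.sum_congr rfl (fun c' _ => ?_)
    rw [Finset.mul_sum, Finset.mul_sum]
    exact Finset.sum_congr rfl (fun c'' _ => by ring)
  simp only [step]
  rw [Finset.sum_comm]
  have swap2 : ∀ c' : Fin n,
      (∑ ρ : Fin n → Bool, ∑ c'', (a c' * a c'') * (wRow p ρ * (ind (ρ c) * (ind (ρ c') * ind (ρ c'')))))
      = ∑ c'' : Fin n, ∑ ρ : Fin n → Bool, (a c' * a c'') * (wRow p ρ * (ind (ρ c) * (ind (ρ c') * ind (ρ c'')))) :=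
    fun c' => Finset.sum_comm
  simp only [swap2]
  have e1 : ∀ c' c'' : Fin n,
      (∑ ρ : Fin n → Bool, (a c' * a c'') * (wRow p ρ * (ind (ρ c) * (ind (ρ c') * ind (ρ c'')))))
      = p ^ 3 * (a c' * a c'')
        + (p ^ 2 - p ^ 3) * (if c' = c then a c' * a c'' else 0)
        + (p ^ 2 - p ^ 3) * (if c'' = c then a c' * a c'' else 0)
        + (p ^ 2 - p ^ 3) * (if c'' = c' then a c' * a c'' else 0)
        + (p - 3 * p ^ 2 + 2 * p ^ 3) * (if c' = c then (if c'' = c then a c' * a c'' else 0) else 0) := by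
    intro c' c''
    rw [← Finset.mul_sum, mom3_val]
    split_ifs <;> ring
  simp only [e1]
  simp only [Finset.sum_add_distrib]
  have A1 : ∑ c' : Fin n, ∑ c'' : Fin n, p ^ 3 * (a c' * a c'') = p ^ 3 * (∑ c', a c') ^ 2 := by
    rw [sq, Finset.sum_mul_sum, Finset.mul_sum]
    exact Finset.sum_congr rfl (fun c' _ => by rw [Finset.mul_sum])
  have B1 : ∑ c' : Fin n, ∑ c'' : Fin n, (p ^ 2 - p ^ 3) * (if c' = c then a c' * a c'' else 0)
      = (p ^ 2 - p ^ 3) * (a c * ∑ c'', a c'') := by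
    have inner : ∀ c' : Fin n, (∑ c'' : Fin n, (p ^ 2 - p ^ 3) * (if c' = c then a c' * a c'' else 0))
        = if c' = c then (p ^ 2 - p ^ 3) * (a c' * ∑ c'', a c'') else 0 := by
      intro c'; split_ifs with h <;> simp [Finset.mul_sum]
    simp only [inner]
    rw [sum_ite_pt c (fun c' => (p ^ 2 - p ^ 3) * (a c' * ∑ c'', a c''))]
  have C1 : ∑ c' : Fin n, ∑ c'' : Fin n, (p ^ 2 - p ^ 3) * (if c'' = c then a c' * a c'' else 0)
      = (p ^ 2 - p ^ 3) * ((∑ c', a c') * a c) := by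
    have inner : ∀ c' : Fin n, (∑ c'' : Fin n, (p ^ 2 - p ^ 3) * (if c'' = c then a c' * a c'' else 0))
        = (p ^ 2 - p ^ 3) * (a c' * a c) := by
      intro c'
      rw [← Finset.mul_sum, sum_ite_pt c (fun c'' => a c' * a c'')]
    simp only [inner]
    rw [← Finset.mul_sum, ← Finset.sum_mul]
  have D1 : ∑ c' : Fin n, ∑ c'' : Fin n, (p ^ 2 - p ^ 3) * (if c'' = c' then a c' * a c'' else 0)
      = (p ^ 2 - p ^ 3) * (∑ c', (a c') ^ 2) := by
    have inner : ∀ c' : Fin n, (∑ c'' : Fin n, (p ^ 2 - p ^ 3) * (if c'' = c' then a c' * a c'' else 0))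
        = (p ^ 2 - p ^ 3) * (a c') ^ 2 := by
      intro c'
      rw [← Finset.mul_sum, sum_ite_pt c' (fun c'' => a c' * a c'')]; ring
    simp only [inner]
    rw [← Finset.mul_sum]
  have E1 : ∑ c' : Fin n, ∑ c'' : Fin n,
        (p - 3 * p ^ 2 + 2 * p ^ 3) * (if c' = c then (if c'' = c then a c' * a c'' else 0) else 0)
      = (p - 3 * p ^ 2 + 2 * p ^ 3) * (a c * a c) := by
    have inner : ∀ c' : Fin n, (∑ c'' : Fin n,
          (p - 3 * p ^ 2 + 2 * p ^ 3) * (if c' = c then (if c'' = c then a c' * a c'' else 0) else 0))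
        = if c' = c then (p - 3 * p ^ 2 + 2 * p ^ 3) * (a c' * a c) else 0 := by
      intro c'
      split_ifs with h
      · rw [← Finset.mul_sum, sum_ite_pt c (fun c'' => a c' * a c'')]
      · simp
    simp only [inner]
    rw [sum_ite_pt c (fun c' => (p - 3 * p ^ 2 + 2 * p ^ 3) * (a c' * a c))]
  rw [A1, B1, C1, D1, E1]
  ring


section Model
variable {m n : ℕ}

noncomputable def G1 (A : Matrix (Fin m) (Fin n) ℝ) (p : ℝ) (x : Fin n → ℝ)
    (r : Fin m) (c : Fin n) (ρ : Fin n → Bool) : ℝ :=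
  ind (ρ c) * A r c * ((1 / p ^ 2) * ∑ c', ind (ρ c') * (A r c' * x c'))
    - (1 - p) / p ^ 2 * (ind (ρ c) * (A r c ^ 2 * x c))

noncomputable def G2 (A : Matrix (Fin m) (Fin n) ℝ) (b : Fin m → ℝ) (p q : ℝ)
    (r : Fin m) (c : Fin n) (ρ : Fin n → Bool) : ℝ :=
  -(1 / (p * q)) * (ind (ρ c) * (A r c * b r))

noncomputable def Yf (A : Matrix (Fin m) (Fin n) ℝ) (b : Fin m → ℝ) (p q : ℝ) (x : Fin n → ℝ)
    (r : Fin m) (c : Fin n) (ρ : Fin n → Bool) (e : Bool) : ℝ :=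
  G1 A p x r c ρ + G2 A b p q r c ρ * ind e

noncomputable def EY (A : Matrix (Fin m) (Fin n) ℝ) (b : Fin m → ℝ) (x : Fin n → ℝ)
    (r : Fin m) (c : Fin n) : ℝ :=
  A r c * ((∑ c', A r c' * x c') - b r)

noncomputable def EYsq (A : Matrix (Fin m) (Fin n) ℝ) (b : Fin m → ℝ) (p q : ℝ) (x : Fin n → ℝ)
    (r : Fin m) (c : Fin n) : ℝ :=
  A r c ^ 2 * ( ((∑ c', A r c' * x c') - b r) ^ 2 / p
    + (1 - p) / p ^ 2 * ((∑ c', (A r c' * x c') ^ 2) - (A r c * x c) ^ 2)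
    + (1 - q) / (p * q) * b r ^ 2 )

variable (A : Matrix (Fin m) (Fin n) ℝ) (b : Fin m → ℝ) (p q : ℝ) (x : Fin n → ℝ)

lemma Erow_G1 (hp : p ≠ 0) (r : Fin m) (c : Fin n) :
    ∑ ρ : Fin n → Bool, wRow p ρ * G1 A p x r c ρ = A r c * ∑ c', A r c' * x c' := by
  have pt : ∀ ρ : Fin n → Bool, wRow p ρ * G1 A p x r c ρ
      = (A r c * (1 / p ^ 2)) * (wRow p ρ * (ind (ρ c) * ∑ c', ind (ρ c') * (A r c' * x c')))
        + (-((1 - p) / p ^ 2 * (A r c ^ 2 * x c))) * (wRow p ρ * ind (ρ c)) := by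
    intro ρ; unfold G1; ring
  simp only [pt]
  rw [Finset.sum_add_distrib, ← Finset.mul_sum, ← Finset.mul_sum,
    Erow_P1 p c (fun c' => A r c' * x c'), Erow_ind]
  field_simp
  ring

lemma Erow_G2 (hp : p ≠ 0) (hq : q ≠ 0) (r : Fin m) (c : Fin n) :
    ∑ ρ : Fin n → Bool, wRow p ρ * G2 A b p q r c ρ = -(A r c * b r / q) := by
  have pt : ∀ ρ : Fin n → Bool, wRow p ρ * G2 A b p q r c ρ
      = (-(1 / (p * q)) * (A r c * b r)) * (wRow p ρ * ind (ρ c)) := by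
    intro ρ; unfold G2; ring
  simp only [pt]
  rw [← Finset.mul_sum, Erow_ind]
  field_simp

lemma Erow_G1sq (hp : p ≠ 0) (r : Fin m) (c : Fin n) :
    ∑ ρ : Fin n → Bool, wRow p ρ * (G1 A p x r c ρ) ^ 2
      = A r c ^ 2 * ( (∑ c', A r c' * x c') ^ 2 / p
          + (1 - p) / p ^ 2 * ((∑ c', (A r c' * x c') ^ 2) - (A r c * x c) ^ 2) ) := by
  have pt : ∀ ρ : Fin n → Bool, wRow p ρ * (G1 A p x r c ρ) ^ 2
      = (A r c * (1 / p ^ 2)) ^ 2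
          * (wRow p ρ * (ind (ρ c) * (∑ c', ind (ρ c') * (A r c' * x c')) ^ 2))
        + (-(2 * (A r c * (1 / p ^ 2)) * ((1 - p) / p ^ 2 * (A r c ^ 2 * x c))))
          * (wRow p ρ * (ind (ρ c) * ∑ c', ind (ρ c') * (A r c' * x c')))
        + ((1 - p) / p ^ 2 * (A r c ^ 2 * x c)) ^ 2 * (wRow p ρ * ind (ρ c)) := by
    intro ρ
    unfold G1
    by_cases h : ρ c <;> simp [ind, h] <;> ring
  simp only [pt]
  rw [Finset.sum_add_distrib, Finset.sum_add_distrib, ← Finset.mul_sum, ← Finset.mul_sum,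
    ← Finset.mul_sum, Erow_P2 p c (fun c' => A r c' * x c'),
    Erow_P1 p c (fun c' => A r c' * x c'), Erow_ind]
  field_simp
  ring

lemma Erow_G1G2 (hp : p ≠ 0) (hq : q ≠ 0) (r : Fin m) (c : Fin n) :
    ∑ ρ : Fin n → Bool, wRow p ρ * (G1 A p x r c ρ * G2 A b p q r c ρ)
      = -(A r c ^ 2 * (∑ c', A r c' * x c') * b r / (p * q)) := by
  have pt : ∀ ρ : Fin n → Bool, wRow p ρ * (G1 A p x r c ρ * G2 A b p q r c ρ)
      = ((A r c * (1 / p ^ 2)) * (-(1 / (p * q)) * (A r c * b r)))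
          * (wRow p ρ * (ind (ρ c) * ∑ c', ind (ρ c') * (A r c' * x c')))
        + (-((1 - p) / p ^ 2 * (A r c ^ 2 * x c)) * (-(1 / (p * q)) * (A r c * b r)))
          * (wRow p ρ * ind (ρ c)) := by
    intro ρ
    unfold G1 G2
    by_cases h : ρ c <;> simp [ind, h] <;> ring
  simp only [pt]
  rw [Finset.sum_add_distrib, ← Finset.mul_sum, ← Finset.mul_sum,
    Erow_P1 p c (fun c' => A r c' * x c'), Erow_ind]
  field_simp
  ring

lemma Erow_G2sq (hp : p ≠ 0) (hq : q ≠ 0) (r : Fin m) (c : Fin n) :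
    ∑ ρ : Fin n → Bool, wRow p ρ * (G2 A b p q r c ρ) ^ 2
      = A r c ^ 2 * b r ^ 2 / (p * q ^ 2) := by
  have pt : ∀ ρ : Fin n → Bool, wRow p ρ * (G2 A b p q r c ρ) ^ 2
      = ((1 / (p * q)) * (A r c * b r)) ^ 2 * (wRow p ρ * ind (ρ c)) := by
    intro ρ
    unfold G2
    by_cases h : ρ c <;> simp [ind, h] <;> ring
  simp only [pt]
  rw [← Finset.mul_sum, Erow_ind]
  field_simp


lemma wM_eq (p : ℝ) (dl : Fin m → Fin n → Bool) : wM p dl = ∏ r, wRow p (dl r) := rfl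

lemma wV_eq (q : ℝ) (ep : Fin m → Bool) : wV q ep = ∏ r, bp q (ep r) := rfl

lemma Edelta_single (p : ℝ) (F : (Fin n → Bool) → ℝ) (r : Fin m) :
    ∑ dl : Fin m → Fin n → Bool, wM p dl * F (dl r) = ∑ ρ, wRow p ρ * F ρ := by
  simp only [wM_eq]
  exact Epi_single (sum_wRow p) F r

lemma Edelta_pair (p : ℝ) (F G : (Fin n → Bool) → ℝ) {r r' : Fin m} (h : r ≠ r') :
    ∑ dl : Fin m → Fin n → Bool, wM p dl * (F (dl r) * G (dl r'))
      = (∑ ρ, wRow p ρ * F ρ) * (∑ ρ, wRow p ρ * G ρ) := by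
  simp only [wM_eq]
  exact Epi_pair (sum_wRow p) F G h

lemma Eeps_one (q : ℝ) : ∑ ep : Fin m → Bool, wV q ep = 1 := by
  simp only [wV_eq]
  exact Epi_one (sum_bp q)

lemma Eeps_ind (q : ℝ) (r : Fin m) :
    ∑ ep : Fin m → Bool, wV q ep * ind (ep r) = q := by
  simp only [wV_eq]
  refine Eq.trans (Epi_single (sum_bp q) ind r) ?_
  simp [bp, ind, Fintype.sum_bool]

lemma Eeps_ind2 (q : ℝ) {r r' : Fin m} (h : r ≠ r') :
    ∑ ep : Fin m → Bool, wV q ep * (ind (ep r) * ind (ep r')) = q * q := by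
  simp only [wV_eq]
  refine Eq.trans (Epi_pair (sum_bp q) ind ind h) ?_
  simp [bp, ind, Fintype.sum_bool]

variable {A} {b} {p q} {x}

lemma E_Ysq (hp : p ≠ 0) (hq : q ≠ 0) (r : Fin m) (c : Fin n) :
    ∑ dl : Fin m → Fin n → Bool, ∑ ep : Fin m → Bool,
        (wM p dl * wV q ep) * (Yf A b p q x r c (dl r) (ep r)) ^ 2
      = EYsq A b p q x r c := by
  have inner : ∀ dl : Fin m → Fin n → Bool,
      (∑ ep : Fin m → Bool, (wM p dl * wV q ep) * (Yf A b p q x r c (dl r) (ep r)) ^ 2)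
      = wM p dl * ((G1 A p x r c (dl r)) ^ 2
          + q * (2 * (G1 A p x r c (dl r) * G2 A b p q r c (dl r)) + (G2 A b p q r c (dl r)) ^ 2)) := by
    intro dl
    have pt : ∀ ep : Fin m → Bool, (wM p dl * wV q ep) * (Yf A b p q x r c (dl r) (ep r)) ^ 2
        = (wM p dl * (G1 A p x r c (dl r)) ^ 2) * wV q ep
          + (wM p dl * (2 * (G1 A p x r c (dl r) * G2 A b p q r c (dl r))
              + (G2 A b p q r c (dl r)) ^ 2)) * (wV q ep * ind (ep r)) := by
      intro ep
      by_cases he : ep r <;> simp [Yf, ind, he] <;> ring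
    simp only [pt]
    rw [Finset.sum_add_distrib, ← Finset.mul_sum, ← Finset.mul_sum, Eeps_one, Eeps_ind]
    ring
  simp only [inner]
  have hs : ∑ dl : Fin m → Fin n → Bool, wM p dl * ((G1 A p x r c (dl r)) ^ 2
      + q * (2 * (G1 A p x r c (dl r) * G2 A b p q r c (dl r)) + (G2 A b p q r c (dl r)) ^ 2))
      = ∑ ρ : Fin n → Bool, wRow p ρ * ((G1 A p x r c ρ) ^ 2
      + q * (2 * (G1 A p x r c ρ * G2 A b p q r c ρ) + (G2 A b p q r c ρ) ^ 2)) :=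
    Edelta_single p (fun ρ => (G1 A p x r c ρ) ^ 2
      + q * (2 * (G1 A p x r c ρ * G2 A b p q r c ρ) + (G2 A b p q r c ρ) ^ 2)) r
  rw [hs]
  have lin : ∑ ρ : Fin n → Bool, wRow p ρ * ((G1 A p x r c ρ) ^ 2
      + q * (2 * (G1 A p x r c ρ * G2 A b p q r c ρ) + (G2 A b p q r c ρ) ^ 2))
      = (∑ ρ : Fin n → Bool, wRow p ρ * (G1 A p x r c ρ) ^ 2)
        + q * (2 * (∑ ρ : Fin n → Bool, wRow p ρ * (G1 A p x r c ρ * G2 A b p q r c ρ))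
          + (∑ ρ : Fin n → Bool, wRow p ρ * (G2 A b p q r c ρ) ^ 2)) := by
    have pt2 : ∀ ρ : Fin n → Bool, wRow p ρ * ((G1 A p x r c ρ) ^ 2
        + q * (2 * (G1 A p x r c ρ * G2 A b p q r c ρ) + (G2 A b p q r c ρ) ^ 2))
        = wRow p ρ * (G1 A p x r c ρ) ^ 2
          + ((q * 2) * (wRow p ρ * (G1 A p x r c ρ * G2 A b p q r c ρ))
            + q * (wRow p ρ * (G2 A b p q r c ρ) ^ 2)) := by
      intro ρ; ring
    simp only [pt2]
    rw [Finset.sum_add_distrib, Finset.sum_add_distrib, ← Finset.mul_sum, ← Finset.mul_sum]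
    ring
  rw [lin, Erow_G1sq A p x hp r c, Erow_G1G2 A b p q x hp hq r c, Erow_G2sq A b p q hp hq r c]
  unfold EYsq
  field_simp
  ring

lemma E_Yprod (hp : p ≠ 0) (hq : q ≠ 0) {r r' : Fin m} (h : r ≠ r') (c : Fin n) :
    ∑ dl : Fin m → Fin n → Bool, ∑ ep : Fin m → Bool,
        (wM p dl * wV q ep) * (Yf A b p q x r c (dl r) (ep r) * Yf A b p q x r' c (dl r') (ep r'))
      = EY A b x r c * EY A b x r' c := by
  have inner : ∀ dl : Fin m → Fin n → Bool,
      (∑ ep : Fin m → Bool, (wM p dl * wV q ep)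
          * (Yf A b p q x r c (dl r) (ep r) * Yf A b p q x r' c (dl r') (ep r')))
      = wM p dl * ((G1 A p x r c (dl r) * G1 A p x r' c (dl r'))
          + q * (G1 A p x r c (dl r) * G2 A b p q r' c (dl r'))
          + q * (G2 A b p q r c (dl r) * G1 A p x r' c (dl r'))
          + (q * q) * (G2 A b p q r c (dl r) * G2 A b p q r' c (dl r'))) := by
    intro dl
    have pt : ∀ ep : Fin m → Bool, (wM p dl * wV q ep)
        * (Yf A b p q x r c (dl r) (ep r) * Yf A b p q x r' c (dl r') (ep r'))
        = (wM p dl * (G1 A p x r c (dl r) * G1 A p x r' c (dl r'))) * wV q ep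
          + (wM p dl * (G1 A p x r c (dl r) * G2 A b p q r' c (dl r'))) * (wV q ep * ind (ep r'))
          + (wM p dl * (G2 A b p q r c (dl r) * G1 A p x r' c (dl r'))) * (wV q ep * ind (ep r))
          + (wM p dl * (G2 A b p q r c (dl r) * G2 A b p q r' c (dl r')))
              * (wV q ep * (ind (ep r) * ind (ep r'))) := by
      intro ep
      by_cases he : ep r <;> by_cases he' : ep r' <;> simp [Yf, ind, he, he'] <;> ring
    simp only [pt]
    rw [Finset.sum_add_distrib, Finset.sum_add_distrib, Finset.sum_add_distrib,
      ← Finset.mul_sum, ← Finset.mul_sum, ← Finset.mul_sum, ← Finset.mul_sum,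
      Eeps_one, Eeps_ind q r, Eeps_ind q r', Eeps_ind2 q h]
    ring
  simp only [inner]
  have pt2 : ∀ dl : Fin m → Fin n → Bool, wM p dl * ((G1 A p x r c (dl r) * G1 A p x r' c (dl r'))
          + q * (G1 A p x r c (dl r) * G2 A b p q r' c (dl r'))
          + q * (G2 A b p q r c (dl r) * G1 A p x r' c (dl r'))
          + (q * q) * (G2 A b p q r c (dl r) * G2 A b p q r' c (dl r')))
      = wM p dl * (G1 A p x r c (dl r) * G1 A p x r' c (dl r'))
        + (q * (wM p dl * (G1 A p x r c (dl r) * G2 A b p q r' c (dl r')))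
        + (q * (wM p dl * (G2 A b p q r c (dl r) * G1 A p x r' c (dl r')))
        + (q * q) * (wM p dl * (G2 A b p q r c (dl r) * G2 A b p q r' c (dl r'))))) := by
    intro dl; ring
  simp only [pt2]
  rw [Finset.sum_add_distrib, Finset.sum_add_distrib, Finset.sum_add_distrib,
    ← Finset.mul_sum, ← Finset.mul_sum, ← Finset.mul_sum,
    Edelta_pair p (G1 A p x r c) (G1 A p x r' c) h,
    Edelta_pair p (G1 A p x r c) (G2 A b p q r' c) h,
    Edelta_pair p (G2 A b p q r c) (G1 A p x r' c) h,
    Edelta_pair p (G2 A b p q r c) (G2 A b p q r' c) h,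
    Erow_G1 A p x hp r c, Erow_G1 A p x hp r' c,
    Erow_G2 A b p q hp hq r c, Erow_G2 A b p q hp hq r' c]
  unfold EY
  field_simp
  ring


lemma E_Tsq (hp : p ≠ 0) (hq : q ≠ 0) (Ri : Finset (Fin m)) (c : Fin n) :
    ∑ dl : Fin m → Fin n → Bool, ∑ ep : Fin m → Bool,
        (wM p dl * wV q ep) * (∑ r ∈ Ri, Yf A b p q x r c (dl r) (ep r)) ^ 2
      = (∑ r ∈ Ri, EY A b x r c) ^ 2
        + ∑ r ∈ Ri, (EYsq A b p q x r c - EY A b x r c ^ 2) := by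
  have pt : ∀ (dl : Fin m → Fin n → Bool) (ep : Fin m → Bool),
      (wM p dl * wV q ep) * (∑ r ∈ Ri, Yf A b p q x r c (dl r) (ep r)) ^ 2
      = ∑ r ∈ Ri, ∑ r' ∈ Ri, (wM p dl * wV q ep)
          * (Yf A b p q x r c (dl r) (ep r) * Yf A b p q x r' c (dl r') (ep r')) := by
    intro dl ep
    rw [sq, Finset.sum_mul_sum, Finset.mul_sum]
    exact Finset.sum_congr rfl fun r _ => by rw [Finset.mul_sum]
  simp only [pt]
  have sw1 : ∀ dl : Fin m → Fin n → Bool,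
      (∑ ep : Fin m → Bool, ∑ r ∈ Ri, ∑ r' ∈ Ri, (wM p dl * wV q ep)
          * (Yf A b p q x r c (dl r) (ep r) * Yf A b p q x r' c (dl r') (ep r')))
      = ∑ r ∈ Ri, ∑ r' ∈ Ri, ∑ ep : Fin m → Bool, (wM p dl * wV q ep)
          * (Yf A b p q x r c (dl r) (ep r) * Yf A b p q x r' c (dl r') (ep r')) := by
    intro dl
    rw [Finset.sum_comm]
    exact Finset.sum_congr rfl fun r _ => Finset.sum_comm
  simp only [sw1]
  rw [Finset.sum_comm]
  have sw2 : ∀ r : Fin m,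
      (∑ dl : Fin m → Fin n → Bool, ∑ r' ∈ Ri, ∑ ep : Fin m → Bool, (wM p dl * wV q ep)
          * (Yf A b p q x r c (dl r) (ep r) * Yf A b p q x r' c (dl r') (ep r')))
      = ∑ r' ∈ Ri, ∑ dl : Fin m → Fin n → Bool, ∑ ep : Fin m → Bool, (wM p dl * wV q ep)
          * (Yf A b p q x r c (dl r) (ep r) * Yf A b p q x r' c (dl r') (ep r')) :=
    fun r => Finset.sum_comm
  simp only [sw2]
  have val : ∀ r r' : Fin m,
      (∑ dl : Fin m → Fin n → Bool, ∑ ep : Fin m → Bool, (wM p dl * wV q ep)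
          * (Yf A b p q x r c (dl r) (ep r) * Yf A b p q x r' c (dl r') (ep r')))
      = EY A b x r c * EY A b x r' c
        + (if r = r' then EYsq A b p q x r c - EY A b x r c ^ 2 else 0) := by
    intro r r'
    by_cases h : r = r'
    · subst h
      have e : ∀ (dl : Fin m → Fin n → Bool) (ep : Fin m → Bool),
          Yf A b p q x r c (dl r) (ep r) * Yf A b p q x r c (dl r) (ep r)
          = Yf A b p q x r c (dl r) (ep r) ^ 2 := fun dl ep => (sq _).symm
      simp only [e]
      rw [E_Ysq hp hq r c]
      simp
      ring
    · rw [E_Yprod hp hq h c]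
      simp [h]
  simp only [val]
  simp only [Finset.sum_add_distrib]
  congr 1
  · rw [sq, Finset.sum_mul_sum]
  · refine Finset.sum_congr rfl fun r hr => ?_
    rw [Finset.sum_ite_eq Ri r (fun _ => EYsq A b p q x r c - EY A b x r c ^ 2), if_pos hr]

end Model

lemma partition_sum {k u : ℕ} {P : Fin u → Finset (Fin k)} (hP : IsPartition P) (h : Fin k → ℝ) :
    ∑ i, ∑ r ∈ P i, h r = ∑ r, h r := by
  have e1 : ∀ i, ∑ r ∈ P i, h r = ∑ r, if r ∈ P i then h r else 0 := by
    intro i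
    rw [Finset.sum_ite_mem, Finset.univ_inter]
  simp only [e1]
  rw [Finset.sum_comm]
  refine Finset.sum_congr rfl fun r _ => ?_
  obtain ⟨i0, hi0, huni⟩ := hP.1 r
  rw [Finset.sum_eq_single i0]
  · rw [if_pos hi0]
  · intro i _ hne
    rw [if_neg (fun hmem => hne (huni i hmem))]
  · intro habs
    exact absurd (Finset.mem_univ i0) habs

lemma partition_pick {k u : ℕ} {P : Fin u → Finset (Fin k)} (hP : IsPartition P) (c : Fin k)
    (g : ℝ) : ∑ j, (if c ∈ P j then g else 0) = g := by
  obtain ⟨j0, hj0, huni⟩ := hP.1 c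
  rw [Finset.sum_eq_single j0]
  · rw [if_pos hj0]
  · intro j _ hne
    rw [if_neg (fun hmem => hne (huni j hmem))]
  · intro habs
    exact absurd (Finset.mem_univ j0) habs



section Comp
variable {m n s t : ℕ} (A : Matrix (Fin m) (Fin n) ℝ) (b : Fin m → ℝ) (p q : ℝ) (x : Fin n → ℝ)
  (R : Fin s → Finset (Fin m)) (Cc : Fin t → Finset (Fin n))

lemma comp_eq (i : Fin s) (j : Fin t) (c : Fin n) (dl : Fin m → Fin n → Bool)
    (ep : Fin m → Bool) :
    ((dsel (Cc j) * (maskM dl A)ᵀ * dsel (R i)) *ᵥ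
        ((1 / p ^ 2) • (maskM dl A *ᵥ x) - (1 / (p * q)) • maskV ep b)
      - ((1 - p) / p ^ 2) •
          (diagPart (dsel (Cc j) * (maskM dl A)ᵀ * dsel (R i) * maskM dl A) *ᵥ x)) c
    = (if c ∈ Cc j then (1:ℝ) else 0) * (∑ r ∈ R i, Yf A b p q x r c (dl r) (ep r)) := by
  simp only [Pi.sub_apply, Pi.smul_apply, smul_eq_mul, Matrix.mulVec, dotProduct,
    Matrix.mul_apply, dsel, diagPart, maskM, Matrix.diagonal_mul, Matrix.mul_diagonal,
    Matrix.diagonal_apply, Matrix.transpose_apply, Matrix.of_apply, ite_mul, mul_ite,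
    zero_mul, mul_zero, one_mul, mul_one, Finset.sum_ite_eq, Finset.sum_ite_eq',
    Finset.mem_univ, if_true]
  have hIc : ∀ r : Fin m,
      (∑ c' : Fin n, if dl r c' = true then (if c = c' then (if c ∈ Cc j then A r c' else 0) else 0) else 0)
      = (if c ∈ Cc j then (1:ℝ) else 0) * (ind (dl r c) * A r c) := by
    intro r
    rw [Finset.sum_eq_single c]
    · by_cases hd : dl r c <;> by_cases hc : c ∈ Cc j <;> simp [hd, hc, ind]
    · intro c' _ hne
      split_ifs with h1 h2 <;> first | rfl | exact absurd h2.symm hne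
    · intro habs; exact absurd (Finset.mem_univ c) habs
  simp only [hIc]
  have hsum : ∀ r : Fin m, (∑ c' : Fin n, if dl r c' = true then A r c' * x c' else 0)
      = ∑ c', ind (dl r c') * (A r c' * x c') :=
    fun r => Finset.sum_congr rfl (fun c' _ => by by_cases h : dl r c' <;> simp [h, ind])
  by_cases hCc : c ∈ Cc j
  · simp only [hCc, if_true, one_mul]
    have swp : ∀ r : Fin m,
        (if dl r c = true then (if r ∈ R i then ind (dl r c) * A r c * A r c else 0) else 0)
        = (if r ∈ R i then (if dl r c = true then ind (dl r c) * A r c * A r c else 0) else 0) := by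
      intro r; split_ifs <;> rfl
    simp only [swp]
    simp only [Finset.sum_ite_mem, Finset.univ_inter]
    rw [Finset.sum_mul, Finset.mul_sum, ← Finset.sum_sub_distrib]
    refine Finset.sum_congr rfl fun r _ => ?_
    unfold Yf G1 G2 maskV
    by_cases hd : dl r c <;> by_cases he : ep r <;>
      [skip; skip; skip; skip] <;> (simp [hd, he, ind, hsum r]; (try ring); (try tauto))
  · simp [hCc]


lemma step1 (hC : IsPartition Cc) (dl : Fin m → Fin n → Bool) (ep : Fin m → Bool) :
    ∑ i : Fin s, ∑ j : Fin t,
      sqnorm ((dsel (Cc j) * (maskM dl A)ᵀ * dsel (R i)) *ᵥ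
          ((1 / p ^ 2) • (maskM dl A *ᵥ x) - (1 / (p * q)) • maskV ep b)
        - ((1 - p) / p ^ 2) •
            (diagPart (dsel (Cc j) * (maskM dl A)ᵀ * dsel (R i) * maskM dl A) *ᵥ x))
    = ∑ i : Fin s, ∑ c : Fin n, (∑ r ∈ R i, Yf A b p q x r c (dl r) (ep r)) ^ 2 := by
  refine Finset.sum_congr rfl fun i _ => ?_
  have e0 : ∀ j : Fin t,
      sqnorm ((dsel (Cc j) * (maskM dl A)ᵀ * dsel (R i)) *ᵥ
          ((1 / p ^ 2) • (maskM dl A *ᵥ x) - (1 / (p * q)) • maskV ep b)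
        - ((1 - p) / p ^ 2) •
            (diagPart (dsel (Cc j) * (maskM dl A)ᵀ * dsel (R i) * maskM dl A) *ᵥ x))
      = ∑ c : Fin n, (if c ∈ Cc j then (1:ℝ) else 0)
          * (∑ r ∈ R i, Yf A b p q x r c (dl r) (ep r)) ^ 2 := by
    intro j
    unfold sqnorm
    refine Finset.sum_congr rfl fun c _ => ?_
    rw [comp_eq A b p q x R Cc i j c dl ep]
    split_ifs <;> ring
  simp only [e0]
  rw [Finset.sum_comm]
  refine Finset.sum_congr rfl fun c _ => ?_
  have e1 : ∀ j : Fin t, (if c ∈ Cc j then (1:ℝ) else 0)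
        * (∑ r ∈ R i, Yf A b p q x r c (dl r) (ep r)) ^ 2
      = (if c ∈ Cc j then (∑ r ∈ R i, Yf A b p q x r c (dl r) (ep r)) ^ 2 else 0) := by
    intro j; split_ifs <;> ring
  simp only [e1]
  exact partition_pick hC c _

lemma sqnormN_eq : sqnorm (A *ᵥ x - b) = ∑ r, ((∑ c', A r c' * x c') - b r) ^ 2 := by
  unfold sqnorm
  refine Finset.sum_congr rfl fun r _ => ?_
  simp [Matrix.mulVec, dotProduct]

lemma dD_eq : x ⬝ᵥ (diagPart (Aᵀ * A) *ᵥ x) = ∑ r, ∑ c, (A r c * x c) ^ 2 := by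
  simp only [dotProduct, diagPart, Matrix.mulVec, Matrix.mul_apply,
    Matrix.diagonal_apply, Matrix.transpose_apply, ite_mul, zero_mul, mul_ite, mul_zero,
    Finset.sum_ite_eq, Finset.sum_ite_eq', Finset.mem_univ, if_true]
  rw [Finset.sum_comm]
  refine Finset.sum_congr rfl fun r _ => ?_
  rw [Finset.sum_mul, Finset.mul_sum]
  exact Finset.sum_congr rfl fun c _ => by ring

end Comp

end Stmt9Aux

set_option maxHeartbeats 2000000 in
open Stmt9Aux in
theorem stmt9 {m n s t : ℕ} (A : Matrix (Fin m) (Fin n) ℝ) (b : Fin m → ℝ)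
    (p q : ℝ) (hp0 : 0 < p) (hp1 : p ≤ 1) (hq0 : 0 < q) (hq1 : q ≤ 1)
    (R : Fin s → Finset (Fin m)) (Cc : Fin t → Finset (Fin n))
    (hR : IsPartition R) (hC : IsPartition Cc) (x : Fin n → ℝ) :
    ∑ δ : Fin m → Fin n → Bool, ∑ ε : Fin m → Bool,
      (wM p δ * wV q ε) *
        ((1 / (s * t : ℝ)) * ∑ i : Fin s, ∑ j : Fin t,
          sqnorm ((dsel (Cc j) * (maskM δ A)ᵀ * dsel (R i)) *ᵥ
              ((1 / p ^ 2) • (maskM δ A *ᵥ x) - (1 / (p * q)) • maskV ε b)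
            - ((1 - p) / p ^ 2) •
                (diagPart (dsel (Cc j) * (maskM δ A)ᵀ * dsel (R i) * maskM δ A) *ᵥ x)))
      ≤ 2 / ((s * t : ℝ) * p ^ 2) * frobSq A * sqnorm (A *ᵥ x - b)
        + 2 * (1 - q) / ((s * t : ℝ) * p ^ 2 * q) * frobSq A * sqnorm b
        + 2 * (1 - p) / ((s * t : ℝ) * p ^ 3) * frobSq A * (x ⬝ᵥ (diagPart (Aᵀ * A) *ᵥ x))
        + 2 * (1 - p) ^ 2 / ((s * t : ℝ) * p ^ 3) * sqnorm (diagPart (Aᵀ * A) *ᵥ x) := by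
  classical
  have hp : p ≠ 0 := ne_of_gt hp0
  have hq : q ≠ 0 := ne_of_gt hq0
  have hFnn : 0 ≤ frobSq A :=
    Finset.sum_nonneg fun _ _ => Finset.sum_nonneg fun _ _ => sq_nonneg _
  have hNnn : 0 ≤ sqnorm (A *ᵥ x - b) := Finset.sum_nonneg fun _ _ => sq_nonneg _
  have hBnn : 0 ≤ sqnorm b := Finset.sum_nonneg fun _ _ => sq_nonneg _
  have hD2nn : 0 ≤ sqnorm (diagPart (Aᵀ * A) *ᵥ x) := Finset.sum_nonneg fun _ _ => sq_nonneg _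
  have hDline : x ⬝ᵥ (diagPart (Aᵀ * A) *ᵥ x) = ∑ r, ∑ c, (A r c * x c) ^ 2 := dD_eq A x
  have hDnn : 0 ≤ x ⬝ᵥ (diagPart (Aᵀ * A) *ᵥ x) := by
    rw [hDline]
    exact Finset.sum_nonneg fun _ _ => Finset.sum_nonneg fun _ _ => sq_nonneg _
  have hNline : sqnorm (A *ᵥ x - b) = ∑ r, ((∑ c', A r c' * x c') - b r) ^ 2 := sqnormN_eq A b x
  have hRHSnn : 0 ≤ 2 / ((s * t : ℝ) * p ^ 2) * frobSq A * sqnorm (A *ᵥ x - b)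
        + 2 * (1 - q) / ((s * t : ℝ) * p ^ 2 * q) * frobSq A * sqnorm b
        + 2 * (1 - p) / ((s * t : ℝ) * p ^ 3) * frobSq A * (x ⬝ᵥ (diagPart (Aᵀ * A) *ᵥ x))
        + 2 * (1 - p) ^ 2 / ((s * t : ℝ) * p ^ 3) * sqnorm (diagPart (Aᵀ * A) *ᵥ x) := by
    have nn1 : (0:ℝ) ≤ 2 / ((s * t : ℝ) * p ^ 2) := by positivity
    have nn2 : (0:ℝ) ≤ 2 * (1 - q) / ((s * t : ℝ) * p ^ 2 * q) := by
      apply div_nonneg (by linarith) (by positivity)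
    have nn3 : (0:ℝ) ≤ 2 * (1 - p) / ((s * t : ℝ) * p ^ 3) := by
      apply div_nonneg (by linarith) (by positivity)
    have nn4 : (0:ℝ) ≤ 2 * (1 - p) ^ 2 / ((s * t : ℝ) * p ^ 3) := by positivity
    have t1 := mul_nonneg (mul_nonneg nn1 hFnn) hNnn
    have t2 := mul_nonneg (mul_nonneg nn2 hFnn) hBnn
    have t3 := mul_nonneg (mul_nonneg nn3 hFnn) hDnn
    have t4 := mul_nonneg nn4 hD2nn
    linarith
  by_cases hs0 : s = 0
  · subst hs0
    simp only [Finset.univ_eq_empty, Finset.sum_empty, mul_zero, Finset.sum_const_zero]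
    exact hRHSnn
  by_cases ht0 : t = 0
  · subst ht0
    simp only [Finset.univ_eq_empty, Finset.sum_empty, mul_zero, Finset.sum_const_zero]
    exact hRHSnn
  have hu : (0:ℝ) < (s : ℝ) * t := by
    have h1 : 0 < (s:ℝ) := by exact_mod_cast Nat.pos_of_ne_zero hs0
    have h2 : 0 < (t:ℝ) := by exact_mod_cast Nat.pos_of_ne_zero ht0
    exact mul_pos h1 h2
  have hstep : ∀ (dl : Fin m → Fin n → Bool) (ep : Fin m → Bool),
      (∑ i : Fin s, ∑ j : Fin t,
        sqnorm ((dsel (Cc j) * (maskM dl A)ᵀ * dsel (R i)) *ᵥ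
            ((1 / p ^ 2) • (maskM dl A *ᵥ x) - (1 / (p * q)) • maskV ep b)
          - ((1 - p) / p ^ 2) •
              (diagPart (dsel (Cc j) * (maskM dl A)ᵀ * dsel (R i) * maskM dl A) *ᵥ x)))
      = ∑ i : Fin s, ∑ c : Fin n, (∑ r ∈ R i, Yf A b p q x r c (dl r) (ep r)) ^ 2 :=
    fun dl ep => step1 A b p q x R Cc hC dl ep
  have key : (∑ δ : Fin m → Fin n → Bool, ∑ ε : Fin m → Bool,
      (wM p δ * wV q ε) *
        ((1 / (s * t : ℝ)) * ∑ i : Fin s, ∑ j : Fin t,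
          sqnorm ((dsel (Cc j) * (maskM δ A)ᵀ * dsel (R i)) *ᵥ
              ((1 / p ^ 2) • (maskM δ A *ᵥ x) - (1 / (p * q)) • maskV ε b)
            - ((1 - p) / p ^ 2) •
                (diagPart (dsel (Cc j) * (maskM δ A)ᵀ * dsel (R i) * maskM δ A) *ᵥ x))))
      = (1 / (s * t : ℝ)) * ∑ i : Fin s, ∑ c : Fin n,
          ((∑ r ∈ R i, EY A b x r c) ^ 2
            + ∑ r ∈ R i, (EYsq A b p q x r c - EY A b x r c ^ 2)) := by
    simp only [hstep]
    have pt : ∀ (dl : Fin m → Fin n → Bool) (ep : Fin m → Bool),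
        (wM p dl * wV q ep) * ((1 / (s * t : ℝ)) * ∑ i : Fin s, ∑ c : Fin n,
            (∑ r ∈ R i, Yf A b p q x r c (dl r) (ep r)) ^ 2)
        = ∑ i : Fin s, ∑ c : Fin n, (1 / (s * t : ℝ))
            * ((wM p dl * wV q ep) * (∑ r ∈ R i, Yf A b p q x r c (dl r) (ep r)) ^ 2) := by
      intro dl ep
      rw [Finset.mul_sum, Finset.mul_sum]
      refine Finset.sum_congr rfl fun i _ => ?_
      rw [Finset.mul_sum, Finset.mul_sum]
      exact Finset.sum_congr rfl fun c _ => by ring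
    simp only [pt]
    have sw1 : ∀ dl : Fin m → Fin n → Bool,
        (∑ ep : Fin m → Bool, ∑ i : Fin s, ∑ c : Fin n, (1 / (s * t : ℝ))
            * ((wM p dl * wV q ep) * (∑ r ∈ R i, Yf A b p q x r c (dl r) (ep r)) ^ 2))
        = ∑ i : Fin s, ∑ c : Fin n, ∑ ep : Fin m → Bool, (1 / (s * t : ℝ))
            * ((wM p dl * wV q ep) * (∑ r ∈ R i, Yf A b p q x r c (dl r) (ep r)) ^ 2) := by
      intro dl
      rw [Finset.sum_comm]
      exact Finset.sum_congr rfl fun i _ => Finset.sum_comm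
    simp only [sw1]
    rw [Finset.sum_comm]
    have sw2 : ∀ i : Fin s,
        (∑ dl : Fin m → Fin n → Bool, ∑ c : Fin n, ∑ ep : Fin m → Bool, (1 / (s * t : ℝ))
            * ((wM p dl * wV q ep) * (∑ r ∈ R i, Yf A b p q x r c (dl r) (ep r)) ^ 2))
        = ∑ c : Fin n, ∑ dl : Fin m → Fin n → Bool, ∑ ep : Fin m → Bool, (1 / (s * t : ℝ))
            * ((wM p dl * wV q ep) * (∑ r ∈ R i, Yf A b p q x r c (dl r) (ep r)) ^ 2) :=
      fun i => Finset.sum_comm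
    simp only [sw2]
    rw [Finset.mul_sum]
    refine Finset.sum_congr rfl fun i _ => ?_
    rw [Finset.mul_sum]
    refine Finset.sum_congr rfl fun c _ => ?_
    rw [← E_Tsq (A := A) (b := b) (x := x) hp hq (R i) c]
    rw [Finset.mul_sum]
    refine Finset.sum_congr rfl fun dl _ => ?_
    rw [Finset.mul_sum]
  rw [key]
  have CS : ∀ (i : Fin s) (c : Fin n),
      (∑ r ∈ R i, EY A b x r c) ^ 2
        ≤ (∑ r ∈ R i, A r c ^ 2) * sqnorm (A *ᵥ x - b) := by
    intro i c
    have h1 : (∑ r ∈ R i, EY A b x r c) ^ 2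
        ≤ (∑ r ∈ R i, A r c ^ 2) * (∑ r ∈ R i, ((∑ c', A r c' * x c') - b r) ^ 2) := by
      have h2 := Finset.sum_mul_sq_le_sq_mul_sq (R i) (fun r => A r c)
        (fun r => (∑ c', A r c' * x c') - b r)
      simpa [EY] using h2
    refine le_trans h1 (mul_le_mul_of_nonneg_left ?_ (Finset.sum_nonneg fun r _ => sq_nonneg _))
    rw [hNline]
    exact Finset.sum_le_sum_of_subset_of_nonneg (Finset.subset_univ _) fun r _ _ => sq_nonneg _
  have K1 : ∑ i : Fin s, ∑ c : Fin n, (∑ r ∈ R i, EY A b x r c) ^ 2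
      ≤ frobSq A * sqnorm (A *ᵥ x - b) := by
    calc ∑ i : Fin s, ∑ c : Fin n, (∑ r ∈ R i, EY A b x r c) ^ 2
        ≤ ∑ i : Fin s, ∑ c : Fin n, (∑ r ∈ R i, A r c ^ 2) * sqnorm (A *ᵥ x - b) :=
          Finset.sum_le_sum fun i _ => Finset.sum_le_sum fun c _ => CS i c
      _ = (∑ i : Fin s, ∑ c : Fin n, ∑ r ∈ R i, A r c ^ 2) * sqnorm (A *ᵥ x - b) := by
          rw [Finset.sum_mul]
          exact Finset.sum_congr rfl fun i _ => by rw [Finset.sum_mul]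
      _ = frobSq A * sqnorm (A *ᵥ x - b) := by
          congr 1
          calc ∑ i : Fin s, ∑ c : Fin n, ∑ r ∈ R i, A r c ^ 2
              = ∑ c : Fin n, ∑ i : Fin s, ∑ r ∈ R i, A r c ^ 2 := Finset.sum_comm
            _ = ∑ c : Fin n, ∑ r : Fin m, A r c ^ 2 :=
                Finset.sum_congr rfl fun c _ => partition_sum hR (fun r => A r c ^ 2)
            _ = ∑ r : Fin m, ∑ c : Fin n, A r c ^ 2 := Finset.sum_comm
            _ = frobSq A := rfl
  have hV : ∀ (r : Fin m) (c : Fin n),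
      EYsq A b p q x r c - EY A b x r c ^ 2
        ≤ A r c ^ 2 * ((1/p - 1) * ((∑ c', A r c' * x c') - b r) ^ 2
            + (1 - p) / p ^ 2 * (∑ c', (A r c' * x c') ^ 2)
            + (1 - q) / (p * q) * b r ^ 2) := by
    intro r c
    have e : A r c ^ 2 * ((1/p - 1) * ((∑ c', A r c' * x c') - b r) ^ 2
            + (1 - p) / p ^ 2 * (∑ c', (A r c' * x c') ^ 2)
            + (1 - q) / (p * q) * b r ^ 2)
          - (EYsq A b p q x r c - EY A b x r c ^ 2)
        = A r c ^ 2 * ((1 - p) / p ^ 2) * (A r c * x c) ^ 2 := by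
      unfold EYsq EY; ring
    have hk : (0:ℝ) ≤ (1 - p) / p ^ 2 := div_nonneg (by linarith) (by positivity)
    have hnn : 0 ≤ A r c ^ 2 * ((1 - p) / p ^ 2) * (A r c * x c) ^ 2 :=
      mul_nonneg (mul_nonneg (sq_nonneg _) hk) (sq_nonneg _)
    linarith
  have hvar_sum : ∑ i : Fin s, ∑ c : Fin n, ∑ r ∈ R i, (EYsq A b p q x r c - EY A b x r c ^ 2)
      = ∑ r : Fin m, ∑ c : Fin n, (EYsq A b p q x r c - EY A b x r c ^ 2) := by
    calc ∑ i : Fin s, ∑ c : Fin n, ∑ r ∈ R i, (EYsq A b p q x r c - EY A b x r c ^ 2)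
        = ∑ c : Fin n, ∑ i : Fin s, ∑ r ∈ R i, (EYsq A b p q x r c - EY A b x r c ^ 2) :=
          Finset.sum_comm
      _ = ∑ c : Fin n, ∑ r : Fin m, (EYsq A b p q x r c - EY A b x r c ^ 2) :=
          Finset.sum_congr rfl fun c _ =>
            partition_sum hR (fun r => EYsq A b p q x r c - EY A b x r c ^ 2)
      _ = ∑ r : Fin m, ∑ c : Fin n, (EYsq A b p q x r c - EY A b x r c ^ 2) := Finset.sum_comm
  have hrow : ∀ r : Fin m, ∑ c, A r c ^ 2 ≤ frobSq A := by
    intro r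
    exact Finset.single_le_sum (f := fun r => ∑ c, A r c ^ 2)
      (fun r _ => Finset.sum_nonneg fun c _ => sq_nonneg _) (Finset.mem_univ r)
  have h1p : (0:ℝ) ≤ 1/p - 1 := by
    have : 1 ≤ 1/p := by rw [le_div_iff₀ hp0]; linarith
    linarith
  have hα : ∀ r : Fin m, 0 ≤ (1/p - 1) * ((∑ c', A r c' * x c') - b r) ^ 2
      + (1 - p) / p ^ 2 * (∑ c', (A r c' * x c') ^ 2) + (1 - q) / (p * q) * b r ^ 2 := by
    intro r
    have n1 : (0:ℝ) ≤ (1/p - 1) * ((∑ c', A r c' * x c') - b r) ^ 2 :=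
      mul_nonneg h1p (sq_nonneg _)
    have n2 : (0:ℝ) ≤ (1 - p) / p ^ 2 * (∑ c', (A r c' * x c') ^ 2) :=
      mul_nonneg (div_nonneg (by linarith) (by positivity))
        (Finset.sum_nonneg fun _ _ => sq_nonneg _)
    have n3 : (0:ℝ) ≤ (1 - q) / (p * q) * b r ^ 2 :=
      mul_nonneg (div_nonneg (by linarith) (by positivity)) (sq_nonneg _)
    linarith
  have K2 : ∑ i : Fin s, ∑ c : Fin n, ∑ r ∈ R i, (EYsq A b p q x r c - EY A b x r c ^ 2)
      ≤ frobSq A * ((1/p - 1) * sqnorm (A *ᵥ x - b)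
          + (1 - p) / p ^ 2 * (x ⬝ᵥ (diagPart (Aᵀ * A) *ᵥ x))
          + (1 - q) / (p * q) * sqnorm b) := by
    rw [hvar_sum]
    calc ∑ r : Fin m, ∑ c : Fin n, (EYsq A b p q x r c - EY A b x r c ^ 2)
        ≤ ∑ r : Fin m, ∑ c : Fin n, A r c ^ 2 * ((1/p - 1) * ((∑ c', A r c' * x c') - b r) ^ 2
            + (1 - p) / p ^ 2 * (∑ c', (A r c' * x c') ^ 2)
            + (1 - q) / (p * q) * b r ^ 2) :=
          Finset.sum_le_sum fun r _ => Finset.sum_le_sum fun c _ => hV r c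
      _ = ∑ r : Fin m, (∑ c, A r c ^ 2) * ((1/p - 1) * ((∑ c', A r c' * x c') - b r) ^ 2
            + (1 - p) / p ^ 2 * (∑ c', (A r c' * x c') ^ 2)
            + (1 - q) / (p * q) * b r ^ 2) :=
          Finset.sum_congr rfl fun r _ => by rw [Finset.sum_mul]
      _ ≤ ∑ r : Fin m, frobSq A * ((1/p - 1) * ((∑ c', A r c' * x c') - b r) ^ 2
            + (1 - p) / p ^ 2 * (∑ c', (A r c' * x c') ^ 2)
            + (1 - q) / (p * q) * b r ^ 2) :=
          Finset.sum_le_sum fun r _ => mul_le_mul_of_nonneg_right (hrow r) (hα r)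
      _ = frobSq A * ∑ r : Fin m, ((1/p - 1) * ((∑ c', A r c' * x c') - b r) ^ 2
            + (1 - p) / p ^ 2 * (∑ c', (A r c' * x c') ^ 2)
            + (1 - q) / (p * q) * b r ^ 2) := by rw [Finset.mul_sum]
      _ = frobSq A * ((1/p - 1) * sqnorm (A *ᵥ x - b)
          + (1 - p) / p ^ 2 * (x ⬝ᵥ (diagPart (Aᵀ * A) *ᵥ x))
          + (1 - q) / (p * q) * sqnorm b) := by
          congr 1
          rw [Finset.sum_add_distrib, Finset.sum_add_distrib, ← Finset.mul_sum, ← Finset.mul_sum,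
            ← Finset.mul_sum, hNline, hDline]
          rfl
  have hsum_le : ∑ i : Fin s, ∑ c : Fin n,
      ((∑ r ∈ R i, EY A b x r c) ^ 2
        + ∑ r ∈ R i, (EYsq A b p q x r c - EY A b x r c ^ 2))
      ≤ frobSq A * sqnorm (A *ᵥ x - b)
        + frobSq A * ((1/p - 1) * sqnorm (A *ᵥ x - b)
          + (1 - p) / p ^ 2 * (x ⬝ᵥ (diagPart (Aᵀ * A) *ᵥ x))
          + (1 - q) / (p * q) * sqnorm b) := by
    simp only [Finset.sum_add_distrib]
    exact add_le_add K1 K2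
  have c1 : 1/((s * t : ℝ)*p) ≤ 2/((s * t : ℝ)*p^2) := by
    rw [div_le_div_iff₀ (mul_pos hu hp0) (mul_pos hu (by positivity))]
    nlinarith [mul_nonneg (mul_nonneg hu.le hp0.le) (show (0:ℝ) ≤ 2 - p by linarith)]
  have c2 : (1-q)/((s * t : ℝ)*p*q) ≤ 2*(1-q)/((s * t : ℝ)*p^2*q) := by
    rw [div_le_div_iff₀ (mul_pos (mul_pos hu hp0) hq0) (mul_pos (mul_pos hu (by positivity)) hq0)]
    nlinarith [mul_nonneg (mul_nonneg (mul_nonneg (show (0:ℝ) ≤ 1 - q by linarith) hu.le)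
      (mul_nonneg hp0.le hq0.le)) (show (0:ℝ) ≤ 2 - p by linarith)]
  have c3 : (1-p)/((s * t : ℝ)*p^2) ≤ 2*(1-p)/((s * t : ℝ)*p^3) := by
    rw [div_le_div_iff₀ (mul_pos hu (by positivity)) (mul_pos hu (by positivity))]
    nlinarith [mul_nonneg (mul_nonneg (mul_nonneg (show (0:ℝ) ≤ 1 - p by linarith) hu.le)
      (sq_nonneg p)) (show (0:ℝ) ≤ 2 - p by linarith)]
  have i1 : frobSq A * sqnorm (A *ᵥ x - b) * (1/((s * t : ℝ)*p))
      ≤ 2 / ((s * t : ℝ) * p ^ 2) * frobSq A * sqnorm (A *ᵥ x - b) := by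
    have h := mul_le_mul_of_nonneg_right c1 (mul_nonneg hFnn hNnn)
    calc frobSq A * sqnorm (A *ᵥ x - b) * (1/((s * t : ℝ)*p))
        = 1/((s * t : ℝ)*p) * (frobSq A * sqnorm (A *ᵥ x - b)) := by ring
      _ ≤ 2/((s * t : ℝ)*p^2) * (frobSq A * sqnorm (A *ᵥ x - b)) := h
      _ = 2 / ((s * t : ℝ) * p ^ 2) * frobSq A * sqnorm (A *ᵥ x - b) := by ring
  have i2 : frobSq A * sqnorm b * ((1-q)/((s * t : ℝ)*p*q))
      ≤ 2 * (1 - q) / ((s * t : ℝ) * p ^ 2 * q) * frobSq A * sqnorm b := by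
    have h := mul_le_mul_of_nonneg_right c2 (mul_nonneg hFnn hBnn)
    calc frobSq A * sqnorm b * ((1-q)/((s * t : ℝ)*p*q))
        = (1-q)/((s * t : ℝ)*p*q) * (frobSq A * sqnorm b) := by ring
      _ ≤ 2*(1-q)/((s * t : ℝ)*p^2*q) * (frobSq A * sqnorm b) := h
      _ = 2 * (1 - q) / ((s * t : ℝ) * p ^ 2 * q) * frobSq A * sqnorm b := by ring
  have i3 : frobSq A * (x ⬝ᵥ (diagPart (Aᵀ * A) *ᵥ x)) * ((1-p)/((s * t : ℝ)*p^2))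
      ≤ 2 * (1 - p) / ((s * t : ℝ) * p ^ 3) * frobSq A * (x ⬝ᵥ (diagPart (Aᵀ * A) *ᵥ x)) := by
    have h := mul_le_mul_of_nonneg_right c3 (mul_nonneg hFnn hDnn)
    calc frobSq A * (x ⬝ᵥ (diagPart (Aᵀ * A) *ᵥ x)) * ((1-p)/((s * t : ℝ)*p^2))
        = (1-p)/((s * t : ℝ)*p^2) * (frobSq A * (x ⬝ᵥ (diagPart (Aᵀ * A) *ᵥ x))) := by ring
      _ ≤ 2*(1-p)/((s * t : ℝ)*p^3) * (frobSq A * (x ⬝ᵥ (diagPart (Aᵀ * A) *ᵥ x))) := h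
      _ = 2 * (1 - p) / ((s * t : ℝ) * p ^ 3) * frobSq A * (x ⬝ᵥ (diagPart (Aᵀ * A) *ᵥ x)) := by
          ring
  have i4 : (0:ℝ) ≤ 2 * (1 - p) ^ 2 / ((s * t : ℝ) * p ^ 3) * sqnorm (diagPart (Aᵀ * A) *ᵥ x) :=
    mul_nonneg (div_nonneg (by positivity) (by positivity)) hD2nn
  calc (1 / (s * t : ℝ)) * ∑ i : Fin s, ∑ c : Fin n,
        ((∑ r ∈ R i, EY A b x r c) ^ 2
          + ∑ r ∈ R i, (EYsq A b p q x r c - EY A b x r c ^ 2))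
      ≤ (1 / (s * t : ℝ)) * (frobSq A * sqnorm (A *ᵥ x - b)
          + frobSq A * ((1/p - 1) * sqnorm (A *ᵥ x - b)
            + (1 - p) / p ^ 2 * (x ⬝ᵥ (diagPart (Aᵀ * A) *ᵥ x))
            + (1 - q) / (p * q) * sqnorm b)) :=
        mul_le_mul_of_nonneg_left hsum_le (by positivity)
    _ = frobSq A * sqnorm (A *ᵥ x - b) * (1/((s * t : ℝ)*p))
        + frobSq A * sqnorm b * ((1-q)/((s * t : ℝ)*p*q))
        + frobSq A * (x ⬝ᵥ (diagPart (Aᵀ * A) *ᵥ x)) * ((1-p)/((s * t : ℝ)*p^2)) := by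
        field_simp
        ring
    _ ≤ 2 / ((s * t : ℝ) * p ^ 2) * frobSq A * sqnorm (A *ᵥ x - b)
        + 2 * (1 - q) / ((s * t : ℝ) * p ^ 2 * q) * frobSq A * sqnorm b
        + 2 * (1 - p) / ((s * t : ℝ) * p ^ 3) * frobSq A * (x ⬝ᵥ (diagPart (Aᵀ * A) *ᵥ x))
        + 2 * (1 - p) ^ 2 / ((s * t : ℝ) * p ^ 3) * sqnorm (diagPart (Aᵀ * A) *ᵥ x) := by
        linarith
end
end

section
/- Let A ∈ ℝ^{m×n} have full column rank, b ∈ ℝ^m, x* = A†b the least squares solution, and suppose g(x) is a random function satisfying: (i) E[g(x)|x] = (1/(st)) A^T(Ax − b) for all x; (ii) E[‖g(x) − g(x*)‖₂² | x] ≤ ρ ‖x − x*‖₂² for a constant ρ > 0; (iii) E[‖g(x*)‖₂²] ≤ C/(st) for a constant C ≥ 0. Then the iteration x^k = x^{k−1} − α g(x^{k−1}) with constant step size 0 < α < σ_min²(A)/(st ρ) satisfies E[‖x^k − x*‖₂²] ≤ (1 − 2ασ_min²(A)/(st) + 2α²ρ)^k ‖x^0 − x*‖₂² + αC/(σ_min²(A)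 − α st ρ). -/
open Matrix BigOperators Finset Filter

noncomputable section

/-!
Write `e = x - x*`. Since `x*` solves the normal equations, the mean step `E g(x)` equals
`Aᵀ A e / (st)`, so `⟨E g(x), e⟩ ≥ σ² ‖e‖² / (st)`, while `E ‖g(x)‖² ≤ 2ρ ‖e‖² + 2C/(st)`.
Expanding `‖e - α g(x)‖²` gives the one-step recursion
`E ‖e_k‖² ≤ r E ‖e_{k-1}‖² + 2α²C/(st)` with `r = 1 - 2ασ²/(st) + 2α²ρ`, and
`αC/(σ² - α st ρ)` is exactly the fixed point of `y ↦ r y + 2α²C/(st)`, so the bound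
`r^k ‖e_0‖² + αC/(σ² - α st ρ)` propagates by induction. This needs `r ≥ 0`, which holds
because Jensen and Cauchy–Schwarz force `(σ²/(st))² ≤ ρ`.
-/

section Sqnorm

variable {k : ℕ}

lemma sqnorm_eq_dotProduct (v : Fin k → ℝ) : sqnorm v = v ⬝ᵥ v := by
  simp [sqnorm, dotProduct, sq]

lemma sqnorm_nonneg (v : Fin k → ℝ) : 0 ≤ sqnorm v :=
  sum_nonneg fun _ _ => sq_nonneg _

lemma sqnorm_sub_smul (e d : Fin k → ℝ) (α : ℝ) :
    sqnorm (e - α • d) = sqnorm e - 2 * α * (d ⬝ᵥ e) + α ^ 2 * sqnorm d := by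
  simp only [sqnorm_eq_dotProduct, sub_dotProduct, dotProduct_sub, smul_dotProduct,
    dotProduct_smul, smul_eq_mul, dotProduct_comm e d]
  ring

lemma sqnorm_add_le (u v : Fin k → ℝ) : sqnorm (u + v) ≤ 2 * sqnorm u + 2 * sqnorm v := by
  simp only [sqnorm, mul_sum, ← sum_add_distrib, Pi.add_apply]
  gcongr with i
  nlinarith [sq_nonneg (u i - v i)]

lemma dotProduct_sq_le (u v : Fin k → ℝ) : (u ⬝ᵥ v) ^ 2 ≤ sqnorm u * sqnorm v :=
  sum_mul_sq_le_sq_mul_sq _ _ _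

lemma sqnorm_sum_smul_le {Ω : Type*} [Fintype Ω] {w : Ω → ℝ} (hw : ∀ a, 0 ≤ w a)
    (hw1 : ∑ a, w a = 1) (v : Ω → Fin k → ℝ) :
    sqnorm (∑ a, w a • v a) ≤ ∑ a, w a * sqnorm (v a) := by
  calc sqnorm (∑ a, w a • v a) = ∑ i, (∑ a, w a * v a i) ^ 2 := by
        simp [sqnorm, Finset.sum_apply]
    _ ≤ ∑ i, ∑ a, w a * v a i ^ 2 := by
        gcongr with i
        exact Real.pow_arith_mean_le_arith_mean_pow_of_even _ _ _ (fun a _ => hw a) hw1 even_two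
    _ = ∑ a, w a * sqnorm (v a) := by
        rw [sum_comm]
        simp [sqnorm, mul_sum]

end Sqnorm

section Paths

variable {Ω : Type*} [Fintype Ω] (w : Ω → ℝ)

lemma sum_prod_weight_eq_one (hw1 : ∑ a, w a = 1) (k : ℕ) :
    ∑ ω : Fin k → Ω, ∏ i, w (ω i) = 1 := by
  rw [← Fintype.prod_sum]
  simp [hw1]

lemma sum_prod_weight_snoc {k : ℕ} (F : (Fin (k + 1) → Ω) → ℝ) :
    ∑ ω : Fin (k + 1) → Ω, (∏ i, w (ω i)) * F ω
      = ∑ τ : Fin k → Ω, (∏ i, w (τ i)) * ∑ a, w a * F (Fin.snoc τ a) := by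
  rw [← (Fin.snocEquiv fun _ => Ω).sum_comp, Fintype.sum_prod_type, sum_comm]
  refine sum_congr rfl fun τ _ => ?_
  simp [Fin.snocEquiv, Fin.prod_univ_castSucc, mul_sum, mul_assoc, mul_left_comm]

theorem sum_prod_weight_iterate_le (hw : ∀ a, 0 ≤ w a) (hw1 : ∑ a, w a = 1) {V : Type*}
    (F : Ω → V → V) (φ : V → ℝ) {r c B : ℝ} (hr : 0 ≤ r) (hB : 0 ≤ B) (hc : c ≤ (1 - r) * B)
    (hstep : ∀ x, ∑ a, w a * φ (F a x) ≤ r * φ x + c)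
    (X : (k : ℕ) → (Fin k → Ω) → V) (x0 : V) (hX0 : ∀ ω, X 0 ω = x0)
    (hXstep : ∀ k (ω : Fin (k + 1) → Ω),
      X (k + 1) ω = F (ω (Fin.last k)) (X k fun i => ω i.castSucc)) :
    ∀ k, ∑ ω : Fin k → Ω, (∏ i, w (ω i)) * φ (X k ω) ≤ r ^ k * φ x0 + B := by
  intro k
  induction k with
  | zero => simp [hX0, hB]
  | succ k ih =>
    calc ∑ ω : Fin (k + 1) → Ω, (∏ i, w (ω i)) * φ (X (k + 1) ω)
        = ∑ τ : Fin k → Ω, (∏ i, w (τ i)) * ∑ a, w a * φ (F a (X k τ)) := by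
          simp [sum_prod_weight_snoc, hXstep]
      _ ≤ ∑ τ : Fin k → Ω, (∏ i, w (τ i)) * (r * φ (X k τ) + c) := by
          gcongr with τ
          · exact prod_nonneg fun i _ => hw _
          · exact hstep _
      _ = r * ∑ τ : Fin k → Ω, (∏ i, w (τ i)) * φ (X k τ)
            + c * ∑ τ : Fin k → Ω, ∏ i, w (τ i) := by
          rw [mul_sum, mul_sum, ← sum_add_distrib]
          exact sum_congr rfl fun τ _ => by ring
      _ ≤ r * (r ^ k * φ x0 + B) + c := by
          rw [sum_prod_weight_eq_one w hw1, mul_one]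
          gcongr
      _ ≤ r ^ (k + 1) * φ x0 + B := by rw [pow_succ]; nlinarith

end Paths

section StochasticStep

variable {k : ℕ} {Ω : Type*} [Fintype Ω] {w : Ω → ℝ} {g : Ω → (Fin k → ℝ) → Fin k → ℝ}
  {xstar : Fin k → ℝ} {μ ρ : ℝ}

theorem sum_sqnorm_sgdStep_le (hw : ∀ a, 0 ≤ w a) (hw1 : ∑ a, w a = 1) {x : Fin k → ℝ} {K α : ℝ}
    (hmono : μ * sqnorm (x - xstar) ≤ (∑ a, w a • g a x) ⬝ᵥ (x - xstar))
    (hlip : ∑ a, w a * sqnorm (g a x - g a xstar) ≤ ρ * sqnorm (x - xstar))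
    (hK : ∑ a, w a * sqnorm (g a xstar) ≤ K) (hα : 0 ≤ α) :
    ∑ a, w a * sqnorm (x - α • g a x - xstar)
      ≤ (1 - 2 * α * μ + 2 * α ^ 2 * ρ) * sqnorm (x - xstar) + 2 * α ^ 2 * K := by
  have hexpand : ∑ a, w a * sqnorm (x - α • g a x - xstar)
      = sqnorm (x - xstar) - 2 * α * ((∑ a, w a • g a x) ⬝ᵥ (x - xstar))
        + α ^ 2 * ∑ a, w a * sqnorm (g a x) := by
    simp only [sub_right_comm x, sqnorm_sub_smul, sum_dotProduct, smul_dotProduct, smul_eq_mul,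
      mul_add, mul_sub, sum_add_distrib, sum_sub_distrib]
    rw [← sum_mul, hw1, one_mul, mul_sum, mul_sum]
    simp only [mul_left_comm (w _)]
  have hsecond : ∑ a, w a * sqnorm (g a x) ≤ 2 * ρ * sqnorm (x - xstar) + 2 * K :=
    calc ∑ a, w a * sqnorm (g a x)
        ≤ ∑ a, w a * (2 * sqnorm (g a x - g a xstar) + 2 * sqnorm (g a xstar)) := by
          gcongr with a
          · exact hw a
          · simpa using sqnorm_add_le (g a x - g a xstar) (g a xstar)
      _ = 2 * ∑ a, w a * sqnorm (g a x - g a xstar) + 2 * ∑ a, w a * sqnorm (g a xstar) := by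
          simp only [mul_sum, ← sum_add_distrib]
          exact sum_congr rfl fun a _ => by ring
      _ ≤ 2 * ρ * sqnorm (x - xstar) + 2 * K := by linarith
  rw [hexpand]
  nlinarith [mul_le_mul_of_nonneg_left hmono hα, mul_le_mul_of_nonneg_left hsecond (sq_nonneg α)]

lemma sq_le_of_mul_sqnorm_le_dotProduct {d e : Fin k → ℝ} (he : sqnorm e ≠ 0) (hμ : 0 ≤ μ)
    (hmono : μ * sqnorm e ≤ d ⬝ᵥ e) (hd : sqnorm d ≤ ρ * sqnorm e) : μ ^ 2 ≤ ρ := by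
  have hpos : 0 < sqnorm e ^ 2 := pow_pos ((sqnorm_nonneg e).lt_of_ne' he) 2
  have hsq : μ ^ 2 * sqnorm e ^ 2 ≤ ρ * sqnorm e ^ 2 :=
    calc μ ^ 2 * sqnorm e ^ 2 = (μ * sqnorm e) ^ 2 := by ring
      _ ≤ (d ⬝ᵥ e) ^ 2 := pow_le_pow_left₀ (mul_nonneg hμ (sqnorm_nonneg e)) hmono 2
      _ ≤ sqnorm d * sqnorm e := dotProduct_sq_le d e
      _ ≤ ρ * sqnorm e ^ 2 := by nlinarith [sqnorm_nonneg e]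
  exact le_of_mul_le_mul_right hsq hpos

theorem sq_le_of_strongMono_of_meanSqLipschitz (hk : 0 < k) (hw : ∀ a, 0 ≤ w a) (hw1 : ∑ a, w a = 1)
    (hstat : ∑ a, w a • g a xstar = 0) (hμ : 0 ≤ μ)
    (hmono : ∀ x, μ * sqnorm (x - xstar) ≤ (∑ a, w a • g a x) ⬝ᵥ (x - xstar))
    (hlip : ∀ x, ∑ a, w a * sqnorm (g a x - g a xstar) ≤ ρ * sqnorm (x - xstar)) :
    μ ^ 2 ≤ ρ := by
  set e : Fin k → ℝ := Pi.single ⟨0, hk⟩ 1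
  have he : sqnorm e = 1 := by simp [e, sqnorm, Pi.single_apply]
  have hmean : ∑ a, w a • (g a (xstar + e) - g a xstar) = ∑ a, w a • g a (xstar + e) := by
    simp [smul_sub, sum_sub_distrib, hstat]
  refine sq_le_of_mul_sqnorm_le_dotProduct (d := ∑ a, w a • g a (xstar + e)) (e := e)
    (by simp [he]) hμ ?_ ?_
  · simpa using hmono (xstar + e)
  · simpa [← hmean] using (sqnorm_sum_smul_le hw hw1 _).trans (hlip (xstar + e))

end StochasticStep

lemma transpose_mulVec_residual_dotProduct {m n : ℕ} {A : Matrix (Fin m) (Fin n) ℝ}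
    {b : Fin m → ℝ} {xstar : Fin n → ℝ} (hstar : Aᵀ *ᵥ (A *ᵥ xstar) = Aᵀ *ᵥ b)
    (x : Fin n → ℝ) : (Aᵀ *ᵥ (A *ᵥ x - b)) ⬝ᵥ (x - xstar) = sqnorm (A *ᵥ (x - xstar)) := by
  rw [mulVec_sub, ← hstar, ← mulVec_sub, ← mulVec_sub, mulVec_transpose, ← dotProduct_mulVec,
    sqnorm_eq_dotProduct]

theorem stmt13_general {m n s t : ℕ} (A : Matrix (Fin m) (Fin n) ℝ) (b : Fin m → ℝ)
    (σ ρ C α : ℝ)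
    (hσ : ∀ x : Fin n → ℝ, σ ^ 2 * sqnorm x ≤ sqnorm (A *ᵥ x))
    (hst : 0 < s * t)
    (xstar : Fin n → ℝ) (hstar : Aᵀ *ᵥ (A *ᵥ xstar) = Aᵀ *ᵥ b)
    (Ω : Type) [Fintype Ω] (w : Ω → ℝ) (hw : ∀ ω, 0 ≤ w ω) (hw1 : ∑ ω, w ω = 1)
    (g : Ω → (Fin n → ℝ) → (Fin n → ℝ))
    (hunbiased : ∀ x, ∑ ω, w ω • g ω x = (1 / (s * t : ℝ)) • (Aᵀ *ᵥ (A *ᵥ x - b)))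
    (hρ : 0 < ρ)
    (hlip : ∀ x, ∑ ω, w ω * sqnorm (g ω x - g ω xstar) ≤ ρ * sqnorm (x - xstar))
    (hC : 0 ≤ C) (hCbound : ∑ ω, w ω * sqnorm (g ω xstar) ≤ C / (s * t : ℝ))
    (hα : 0 < α) (hα2 : α < σ ^ 2 / ((s * t : ℝ) * ρ))
    (X : (k : ℕ) → (Fin k → Ω) → (Fin n → ℝ)) (x0 : Fin n → ℝ)
    (hX0 : ∀ ω0 : Fin 0 → Ω, X 0 ω0 = x0)
    (hXstep : ∀ (k : ℕ) (ω : Fin (k + 1) → Ω),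
      X (k + 1) ω = X k (fun i => ω i.castSucc)
        - α • g (ω (Fin.last k)) (X k (fun i => ω i.castSucc))) :
    ∀ k : ℕ, ∑ ω : Fin k → Ω, (∏ i, w (ω i)) * sqnorm (X k ω - xstar)
      ≤ (1 - 2 * α * σ ^ 2 / (s * t : ℝ) + 2 * α ^ 2 * ρ) ^ k * sqnorm (x0 - xstar)
        + α * C / (σ ^ 2 - α * (s * t : ℝ) * ρ) := by
  set T : ℝ := s * t
  have hT : 0 < T := by simpa [T] using (Nat.cast_pos (α := ℝ)).mpr hst
  have hgap : 0 < σ ^ 2 - α * T * ρ := by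
    rw [lt_div_iff₀ (by positivity)] at hα2
    linarith
  obtain rfl | hn := Nat.eq_zero_or_pos n
  · intro k
    simpa [sqnorm] using div_nonneg (mul_nonneg hα.le hC) hgap.le
  have hmono : ∀ x, σ ^ 2 / T * sqnorm (x - xstar) ≤ (∑ ω, w ω • g ω x) ⬝ᵥ (x - xstar) := by
    intro x
    rw [hunbiased, smul_dotProduct, transpose_mulVec_residual_dotProduct hstar, smul_eq_mul,
      div_mul_eq_mul_div, one_div_mul_eq_div]
    gcongr
    exact hσ _
  have hstat : ∑ ω, w ω • g ω xstar = 0 := by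
    rw [hunbiased, mulVec_sub, hstar, sub_self, smul_zero]
  have hσρ := sq_le_of_strongMono_of_meanSqLipschitz hn hw hw1 hstat (by positivity) hmono hlip
  rw [mul_div_assoc (2 * α) (σ ^ 2)]
  refine sum_prod_weight_iterate_le w hw hw1 (fun a x => x - α • g a x)
    (fun x => sqnorm (x - xstar)) (c := 2 * α ^ 2 * (C / T)) ?_ (by positivity) ?_
    (fun x => ?_) X x0 hX0 hXstep
  · -- `r ≥ (1 - αμ)² + (αμ)²` with `μ = σ²/T`, since `μ² ≤ ρ`
    nlinarith [sq_nonneg (1 - α * (σ ^ 2 / T)), sq_nonneg (α * (σ ^ 2 / T))]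
  · refine le_of_eq ?_
    field_simp
    ring
  · exact sum_sqnorm_sgdStep_le hw hw1 (hmono x) (hlip x) hCbound hα.le

theorem stmt13 {m n s t : ℕ} (A : Matrix (Fin m) (Fin n) ℝ) (b : Fin m → ℝ)
    (σ ρ C α : ℝ) (hσpos : 0 < σ)
    (hσ : ∀ x : Fin n → ℝ, σ ^ 2 * sqnorm x ≤ sqnorm (A *ᵥ x))
    (hst : 0 < s * t)
    (xstar : Fin n → ℝ) (hstar : Aᵀ *ᵥ (A *ᵥ xstar) = Aᵀ *ᵥ b)
    (Ω : Type) [Fintype Ω] (w : Ω → ℝ) (hw : ∀ ω, 0 ≤ w ω) (hw1 : ∑ ω, w ω = 1)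
    (g : Ω → (Fin n → ℝ) → (Fin n → ℝ))
    (hunbiased : ∀ x, ∑ ω, w ω • g ω x = (1 / (s * t : ℝ)) • (Aᵀ *ᵥ (A *ᵥ x - b)))
    (hρ : 0 < ρ)
    (hlip : ∀ x, ∑ ω, w ω * sqnorm (g ω x - g ω xstar) ≤ ρ * sqnorm (x - xstar))
    (hC : 0 ≤ C) (hCbound : ∑ ω, w ω * sqnorm (g ω xstar) ≤ C / (s * t : ℝ))
    (hα : 0 < α) (hα2 : α < σ ^ 2 / ((s * t : ℝ) * ρ))
    (X : (k : ℕ) → (Fin k → Ω) → (Fin n → ℝ)) (x0 : Fin n → ℝ)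
    (hX0 : ∀ ω0 : Fin 0 → Ω, X 0 ω0 = x0)
    (hXstep : ∀ (k : ℕ) (ω : Fin (k + 1) → Ω),
      X (k + 1) ω = X k (fun i => ω i.castSucc)
        - α • g (ω (Fin.last k)) (X k (fun i => ω i.castSucc))) :
    ∀ k : ℕ, ∑ ω : Fin k → Ω, (∏ i, w (ω i)) * sqnorm (X k ω - xstar)
      ≤ (1 - 2 * α * σ ^ 2 / (s * t : ℝ) + 2 * α ^ 2 * ρ) ^ k * sqnorm (x0 - xstar)
        + α * C / (σ ^ 2 - α * (s * t : ℝ) * ρ) :=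
  stmt13_general A b σ ρ C α hσ hst xstar hstar Ω w hw hw1 g hunbiased hρ hlip hC hCbound hα hα2 X
    x0 hX0 hXstep
end
end
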